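/- arXiv:1412.1748 — 10 statements merged into one kernel-verified Lean document; each statement's English description precedes it below -/
import Mathlib

section
/- Let X be an ℵ-space (a regular Hausdorff space with a σ-locally finite k-network). Then X is metrizable if and only if X is a Fréchet–Urysohn space satisfying property (α₄). -/
open TopologicalSpace Filter Set

/-- A family `N` of subsets of a topological space `X` is a *k-network* if whenever `K ⊆ U`
with `K` compact and `U` open, there is a finite subfamily `F ⊆ N` with `K ⊆ ⋃₀ F ⊆ U`. -/
def IsKNetwork {X : Type*} [TopologicalSpace X] (N : Set (Set X)) : Prop :=
  ∀ K U : Set X, IsCompact K → IsOpen U → K ⊆ U →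
    ∃ F : Set (Set X), F ⊆ N ∧ F.Finite ∧ K ⊆ ⋃₀ F ∧ ⋃₀ F ⊆ U

/-- A family `N` of subsets of `X` is a *network* if for every `x` and every open `U ∋ x`
there is `A ∈ N` with `x ∈ A ⊆ U`. -/
def IsNetwork {X : Type*} [TopologicalSpace X] (N : Set (Set X)) : Prop :=
  ∀ (x : X) (U : Set X), IsOpen U → x ∈ U → ∃ A ∈ N, x ∈ A ∧ A ⊆ U

/-- A family of subsets is *locally finite* if every point has a neighbourhood meeting
only finitely many of its members. -/
def IsLocallyFiniteFamily {X : Type*} [TopologicalSpace X] (N : Set (Set X)) : Prop :=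
  ∀ x : X, ∃ V ∈ nhds x, {A ∈ N | (A ∩ V).Nonempty}.Finite

/-- A family of subsets is *σ-locally finite* if it is a countable union of locally finite
families. -/
def IsSigmaLocallyFinite {X : Type*} [TopologicalSpace X] (N : Set (Set X)) : Prop :=
  ∃ f : ℕ → Set (Set X), (∀ n, IsLocallyFiniteFamily (f n)) ∧ N = ⋃ n, f n

/-- An *ℵ-space* is a regular Hausdorff space with a σ-locally finite k-network. -/
def IsAlephSpace (X : Type*) [TopologicalSpace X] : Prop :=
  RegularSpace X ∧ T2Space X ∧ ∃ N : Set (Set X), IsSigmaLocallyFinite N ∧ IsKNetwork N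

/-- An *ℵ₀-space* is a regular Hausdorff space with a countable k-network. -/
def IsAleph0Space (X : Type*) [TopologicalSpace X] : Prop :=
  RegularSpace X ∧ T2Space X ∧ ∃ N : Set (Set X), N.Countable ∧ IsKNetwork N

/-- `X` has the property (α₄): for every point `x` and every countable family of sequences
all converging to `x`, one can pick a "diagonal" sequence through infinitely many
(distinct) rows converging to `x`. -/
def Alpha4Space (X : Type*) [TopologicalSpace X] : Prop :=
  ∀ (x : X) (u : ℕ → ℕ → X), (∀ m, Tendsto (u m) atTop (nhds x)) →
    ∃ m n : ℕ → ℕ, Function.Injective m ∧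
      Tendsto (fun k => u (m k) (n k)) atTop (nhds x)

/-!
A metrizable space is first countable, hence Fréchet–Urysohn and (α₄). Conversely, the closures
of the members of the σ-locally finite k-network form an increasing sequence `M` of locally
finite families of closed sets. Fréchet–Urysohn and (α₄) force every point `x` of an open set `U`
to have a neighbourhood that is a finite union of members of a single `M p` passing through `x`
and lying in `U`. This makes `X` normal and lets disjoint locally finite closed families be
expanded to disjoint open ones. Open sets are countable unions of closed sets, so locally finite
closed families have σ-discrete closed refinements; expanding these, every open cover has a
σ-locally finite open refinement. Refining the covers by open sets meeting only finitely many
members of `M n` yields a σ-locally finite base, and the Nagata–Smirnov theorem concludes.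
-/

open Function
open Topology
open scoped ENNReal

section LocallyFiniteFamily

variable {X : Type*} [TopologicalSpace X]

theorem isLocallyFiniteFamily_iff {𝒮 : Set (Set X)} :
    IsLocallyFiniteFamily 𝒮 ↔ LocallyFinite ((↑) : 𝒮 → Set X) := by
  refine forall_congr' fun x => exists_congr fun V => and_congr_right fun _ => ?_
  rw [← Set.finite_image_iff Subtype.val_injective.injOn]
  congr!
  ext A
  simp [and_comm]

theorem LocallyFinite.isLocallyFiniteFamily_range {ι : Type*} {f : ι → Set X}
    (hf : LocallyFinite f) : IsLocallyFiniteFamily (range f) :=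
  isLocallyFiniteFamily_iff.mpr hf.on_range

namespace IsLocallyFiniteFamily

variable {𝒮 𝒯 : Set (Set X)}

theorem mono (h : IsLocallyFiniteFamily 𝒮) (hsub : 𝒯 ⊆ 𝒮) : IsLocallyFiniteFamily 𝒯 :=
  fun x => let ⟨V, hV, hfin⟩ := h x; ⟨V, hV, hfin.subset fun _ hA => ⟨hsub hA.1, hA.2⟩⟩

theorem finite_mem (h : IsLocallyFiniteFamily 𝒮) (x : X) : {A ∈ 𝒮 | x ∈ A}.Finite :=
  let ⟨_, hV, hfin⟩ := h x
  hfin.subset fun _ hA => ⟨hA.1, x, hA.2, mem_of_mem_nhds hV⟩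

theorem isClosed_sUnion (h : IsLocallyFiniteFamily 𝒮) (hcl : ∀ A ∈ 𝒮, IsClosed A) :
    IsClosed (⋃₀ 𝒮) := by
  rw [sUnion_eq_iUnion]
  exact (isLocallyFiniteFamily_iff.mp h).isClosed_iUnion fun A => hcl A A.2

theorem image_closure (h : IsLocallyFiniteFamily 𝒮) : IsLocallyFiniteFamily (closure '' 𝒮) := by
  rw [image_eq_range]
  exact (isLocallyFiniteFamily_iff.mp h).closure.isLocallyFiniteFamily_range

theorem biUnion {ι : Type*} {s : Set ι} {𝒮 : ι → Set (Set X)} (hs : s.Finite)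
    (h : ∀ i ∈ s, IsLocallyFiniteFamily (𝒮 i)) : IsLocallyFiniteFamily (⋃ i ∈ s, 𝒮 i) := by
  intro x
  choose! V hV hfin using fun i hi => h i hi x
  refine ⟨⋂ i ∈ s, V i, (biInter_mem hs).mpr hV, ?_⟩
  refine (hs.biUnion fun i hi => hfin i hi).subset ?_
  rintro A ⟨hA, y, hyA, hyV⟩
  obtain ⟨i, hi, hAi⟩ := mem_iUnion₂.mp hA
  exact mem_biUnion hi ⟨hAi, y, hyA, mem_iInter₂.mp hyV i hi⟩

theorem biUnion_of_subset {𝒲 : Set (Set X)} (h : IsLocallyFiniteFamily 𝒲)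
    {𝒞 : Set X → Set (Set X)} (hfin : ∀ W ∈ 𝒲, (𝒞 W).Finite) (hsub : ∀ W ∈ 𝒲, ∀ C ∈ 𝒞 W, C ⊆ W) :
    IsLocallyFiniteFamily (⋃ W ∈ 𝒲, 𝒞 W) := by
  intro x
  obtain ⟨V, hV, hVfin⟩ := h x
  refine ⟨V, hV, (hVfin.biUnion fun W hW => hfin W hW.1).subset ?_⟩
  rintro C ⟨hC, hCV⟩
  obtain ⟨W, hW, hCW⟩ := mem_iUnion₂.mp hC
  exact mem_biUnion ⟨hW, hCV.mono (inter_subset_inter_left V (hsub W hW C hCW))⟩ hCW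

theorem isSigmaLocallyFinite (h : IsLocallyFiniteFamily 𝒮) : IsSigmaLocallyFinite 𝒮 :=
  ⟨fun _ => 𝒮, fun _ => h, (iUnion_const 𝒮).symm⟩

theorem eventually_subset (h : IsLocallyFiniteFamily 𝒮) (hcl : ∀ A ∈ 𝒮, IsClosed A) (x : X) :
    ∀ᶠ y in 𝓝 x, {A ∈ 𝒮 | y ∈ A} ⊆ {A ∈ 𝒮 | x ∈ A} := by
  filter_upwards [(isLocallyFiniteFamily_iff.mp h).eventually_subset (fun A => hcl A A.2) x]
    with y hy A ⟨hA, hyA⟩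
  exact ⟨hA, hy (show (⟨A, hA⟩ : 𝒮) ∈ {i : 𝒮 | y ∈ (i : Set X)} from hyA)⟩

theorem isOpen_setOf_ncard_le (h : IsLocallyFiniteFamily 𝒮) (hcl : ∀ A ∈ 𝒮, IsClosed A)
    (k : ℕ) : IsOpen {x | {A ∈ 𝒮 | x ∈ A}.ncard ≤ k} := by
  refine isOpen_iff_mem_nhds.mpr fun x hx => ?_
  filter_upwards [h.eventually_subset hcl x] with y hy
  exact (ncard_le_ncard hy (h.finite_mem x)).trans hx

/-- The pieces `⋂₀ P ∩ C` with `P` of size `k + 1`, `C` closed, are pairwise disjoint once every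
point of `C` lies in at most `k + 1` members: such a point determines `P`. -/
theorem exists_sigmaDiscrete_refinement (h : IsLocallyFiniteFamily 𝒮)
    (hcl : ∀ A ∈ 𝒮, IsClosed A)
    (hFσ : ∀ U : Set X, IsOpen U → ∃ C : ℕ → Set X, (∀ j, IsClosed (C j)) ∧ ⋃ j, C j = U) :
    ∃ 𝒟 : ℕ → ℕ → Set (Set X), (∀ k j, IsLocallyFiniteFamily (𝒟 k j)) ∧
      (∀ k j, (𝒟 k j).PairwiseDisjoint id) ∧
      (∀ k j, ∀ D ∈ 𝒟 k j, IsClosed D ∧ ∃ A ∈ 𝒮, D ⊆ A) ∧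
      ⋃₀ 𝒮 ⊆ ⋃ (k) (j), ⋃₀ 𝒟 k j := by
  set T : X → Set (Set X) := fun x => {A ∈ 𝒮 | x ∈ A}
  choose C hCc hCU using fun k => hFσ _ (h.isOpen_setOf_ncard_le hcl (k + 1))
  have hT : ∀ {k j x P}, x ∈ C k j → P ⊆ 𝒮 → P.ncard = k + 1 → x ∈ ⋂₀ P → P = T x :=
    fun {k j x P} hx hP hPk hxP => eq_of_subset_of_ncard_le (fun A hA => ⟨hP hA, hxP A hA⟩)
      (hPk ▸ (hCU k).subset (mem_iUnion_of_mem j hx)) (h.finite_mem x)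
  refine ⟨fun k j => (fun P => ⋂₀ P ∩ C k j) '' {P | P ⊆ 𝒮 ∧ P.ncard = k + 1},
    fun k j y => ?_, fun k j => ?_, fun k j => ?_, fun x hx => ?_⟩
  · obtain ⟨V, hV, hfin⟩ := h y
    refine ⟨V, hV, (hfin.finite_subsets.image fun P => ⋂₀ P ∩ C k j).subset ?_⟩
    rintro _ ⟨⟨P, ⟨hP, -⟩, rfl⟩, z, ⟨hzP, -⟩, hzV⟩
    exact ⟨P, fun A hA => ⟨hP hA, z, hzP A hA, hzV⟩, rfl⟩
  · rintro _ ⟨P, ⟨hP, hPk⟩, rfl⟩ _ ⟨P', ⟨hP', hP'k⟩, rfl⟩ hne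
    refine disjoint_left.mpr fun z hz hz' => hne ?_
    rw [hT hz.2 hP hPk hz.1, hT hz'.2 hP' hP'k hz'.1]
  · rintro _ ⟨P, ⟨hP, hPk⟩, rfl⟩
    obtain ⟨A, hA⟩ := nonempty_of_ncard_ne_zero (by omega : P.ncard ≠ 0)
    exact ⟨(isClosed_sInter fun B hB => hcl B (hP hB)).inter (hCc k j), A, hP hA,
      inter_subset_left.trans (sInter_subset_of_mem hA)⟩
  · obtain ⟨A, hA, hxA⟩ := hx
    have hpos : 0 < (T x).ncard := (ncard_pos (h.finite_mem x)).mpr ⟨A, hA, hxA⟩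
    set k := (T x).ncard - 1
    have hk : (T x).ncard = k + 1 := by omega
    obtain ⟨j, hj⟩ := mem_iUnion.mp ((hCU k).symm.subset (show x ∈ _ from hk.le))
    exact mem_iUnion₂.mpr ⟨k, j, _, ⟨T x, ⟨fun B hB => hB.1, hk⟩, rfl⟩, fun B hB => hB.2, hj⟩

end IsLocallyFiniteFamily

theorem IsSigmaLocallyFinite.iUnion {𝒮 : ℕ → Set (Set X)}
    (h : ∀ n, IsSigmaLocallyFinite (𝒮 n)) : IsSigmaLocallyFinite (⋃ n, 𝒮 n) := by
  choose f hf h𝒮 using h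
  refine ⟨fun k => f k.unpair.1 k.unpair.2, fun k => hf _ _, ?_⟩
  rw [iUnion_unpair f]
  simp_rw [h𝒮]

theorem IsSigmaLocallyFinite.biUnion_of_subset {𝒲 : Set (Set X)} (h : IsSigmaLocallyFinite 𝒲)
    {𝒞 : Set X → Set (Set X)} (hfin : ∀ W ∈ 𝒲, (𝒞 W).Finite) (hsub : ∀ W ∈ 𝒲, ∀ C ∈ 𝒞 W, C ⊆ W) :
    IsSigmaLocallyFinite (⋃ W ∈ 𝒲, 𝒞 W) := by
  obtain ⟨f, hf, rfl⟩ := h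
  rw [biUnion_iUnion]
  exact .iUnion fun i => ((hf i).biUnion_of_subset
    (fun W hW => hfin W (mem_iUnion_of_mem i hW))
    (fun W hW => hsub W (mem_iUnion_of_mem i hW))).isSigmaLocallyFinite

end LocallyFiniteFamily

section Separation

variable {X : Type*} [TopologicalSpace X]

theorem normalSpace_of_forall_mem_interior_sUnion {ℱ : ℕ → Set (Set X)}
    (hlf : ∀ n, IsLocallyFiniteFamily (ℱ n)) (hcl : ∀ n, ∀ A ∈ ℱ n, IsClosed A)
    (h : ∀ x U, IsOpen U → x ∈ U → ∃ n, x ∈ interior (⋃₀ {A ∈ ℱ n | A ⊆ U})) :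
    NormalSpace X := by
  have hcover : ∀ s t : Set X, IsClosed t → Disjoint s t → HasSeparatingCover s t := by
    intro s t ht hst
    refine ⟨fun n => interior (⋃₀ {A ∈ ℱ n | A ⊆ tᶜ}),
      fun x hx => mem_iUnion.mpr (h x tᶜ ht.isOpen_compl (hst.subset_compl_right hx)),
      fun n => ⟨isOpen_interior, ?_⟩⟩
    have hclosed : IsClosed (⋃₀ {A ∈ ℱ n | A ⊆ tᶜ}) :=
      ((hlf n).mono fun _ hA => hA.1).isClosed_sUnion fun A hA => hcl n A hA.1
    refine Disjoint.mono_left (closure_minimal interior_subset hclosed) ?_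
    exact subset_compl_iff_disjoint_right.mp (sUnion_subset fun A hA => hA.2)
  exact ⟨fun s t hs ht hst =>
    hasSeparatingCovers_iff_separatedNhds.mp ⟨hcover s t ht hst, hcover t s hs hst.symm⟩⟩

/-- The classical trick behind collectionwise normality: remove from the layers of `D i` the
earlier-or-equal layers of all other indices. -/
theorem exists_pairwise_disjoint_isOpen_of_layers {ι : Type*} {D : ι → Set X}
    {H : ι → ℕ → Set X} (hH : ∀ q, LocallyFinite (H · q)) (hHc : ∀ i q, IsClosed (H i q))
    (hcov : ∀ i, D i ⊆ ⋃ p, interior (H i p))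
    (hdisj : ∀ i j q, i ≠ j → Disjoint (H j q) (D i)) :
    ∃ G : ι → Set X, (∀ i, IsOpen (G i) ∧ D i ⊆ G i) ∧ Pairwise (Disjoint on G) := by
  set C : ι → ℕ → Set X := fun i q => ⋃ j : {j // j ≠ i}, H j q
  have hCc : ∀ i q, IsClosed (C i q) := fun i q =>
    ((hH q).comp_injective Subtype.val_injective).isClosed_iUnion fun j => hHc j q
  have hC : ∀ {i j p p' y}, i ≠ j → p' ≤ p → y ∈ H j p' → y ∈ ⋃ q ∈ Iic p, C i q :=
    fun hij hle hy => mem_biUnion hle (mem_iUnion.mpr ⟨⟨_, hij.symm⟩, hy⟩)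
  refine ⟨fun i => ⋃ p, interior (H i p) \ ⋃ q ∈ Iic p, C i q, fun i => ⟨?_, ?_⟩, ?_⟩
  · exact isOpen_iUnion fun p =>
      isOpen_interior.sdiff ((finite_Iic p).isClosed_biUnion fun q _ => hCc i q)
  · intro x hx
    obtain ⟨p, hp⟩ := mem_iUnion.mp (hcov i hx)
    refine mem_iUnion.mpr ⟨p, hp, fun hxC => ?_⟩
    obtain ⟨q, -, hq⟩ := mem_iUnion₂.mp hxC
    obtain ⟨⟨j, hji⟩, hxj⟩ := mem_iUnion.mp hq
    exact disjoint_left.mp (hdisj i j q hji.symm) hxj hx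
  · intro i j hij
    refine disjoint_left.mpr fun y hyi hyj => ?_
    obtain ⟨p, hyp, hyC⟩ := mem_iUnion.mp hyi
    obtain ⟨p', hyp', hyC'⟩ := mem_iUnion.mp hyj
    rcases le_total p' p with hle | hle
    · exact hyC (hC hij hle (interior_subset hyp'))
    · exact hyC' (hC hij.symm hle (interior_subset hyp))

/-- Shrinking the expansions into an open `W ⊇ ⋃ D` with `closure W ⊆ ⋃ G` makes them locally
finite: near a point of `closure W` only the one `G i` containing it is met. -/
theorem exists_locallyFinite_isOpen_expansion [NormalSpace X] {ι : Type*} {D G V : ι → Set X}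
    (hD : LocallyFinite D) (hDc : ∀ i, IsClosed (D i)) (hG : ∀ i, IsOpen (G i) ∧ D i ⊆ G i)
    (hGd : Pairwise (Disjoint on G)) (hV : ∀ i, IsOpen (V i)) (hDV : ∀ i, D i ⊆ V i) :
    ∃ O : ι → Set X, (∀ i, IsOpen (O i) ∧ D i ⊆ O i ∧ O i ⊆ V i) ∧ LocallyFinite O := by
  obtain ⟨W, hW, hDW, hWG⟩ := normal_exists_closure_subset (hD.isClosed_iUnion hDc)
    (isOpen_iUnion fun i => (hG i).1) (iUnion_mono fun i => (hG i).2)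
  refine ⟨fun i => G i ∩ W ∩ V i, fun i => ⟨((hG i).1.inter hW).inter (hV i), ?_, fun _ h => h.2⟩,
    fun y => ?_⟩
  · exact fun x hx => ⟨⟨(hG i).2 hx, hDW (mem_iUnion_of_mem i hx)⟩, hDV i hx⟩
  by_cases hy : y ∈ closure W
  · obtain ⟨i₀, hyi₀⟩ := mem_iUnion.mp (hWG hy)
    refine ⟨G i₀, (hG i₀).1.mem_nhds hyi₀, (finite_singleton i₀).subset fun i hi => ?_⟩
    by_contra hne
    obtain ⟨z, ⟨⟨hzi, -⟩, -⟩, hzi₀⟩ := hi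
    exact disjoint_left.mp (hGd hne) hzi hzi₀
  · refine ⟨(closure W)ᶜ, isClosed_closure.isOpen_compl.mem_nhds hy, ?_⟩
    convert finite_empty
    exact eq_empty_of_forall_notMem fun i ⟨z, ⟨⟨_, hzW⟩, _⟩, hz⟩ => hz (subset_closure hzW)

end Separation

section NagataSmirnov

variable {X : Type*} [TopologicalSpace X]

theorem exists_continuous_lp_infty_of_locallyFinite {ι : Type*} {g : ι → X → ℝ}
    (hg : ∀ i, Continuous (g i)) (hg1 : ∀ i x, |g i x| ≤ 1)
    (hlf : LocallyFinite fun i => support (g i)) :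
    ∃ Φ : X → lp (fun _ : ι => ℝ) ∞, Continuous Φ ∧ ∀ x i, Φ x i = g i x := by
  have hmem : ∀ x, Memℓp (fun i => g i x) ∞ := fun x =>
    memℓp_infty ⟨1, by rintro _ ⟨i, rfl⟩; exact (Real.norm_eq_abs _).trans_le (hg1 i x)⟩
  refine ⟨fun x => ⟨fun i => g i x, hmem x⟩, continuous_iff_continuousAt.mpr fun x => ?_,
    fun _ _ => rfl⟩
  refine Metric.tendsto_nhds.mpr fun ε hε => ?_
  obtain ⟨V, hV, hfin⟩ := hlf x
  have hnear : ∀ᶠ y in 𝓝 x, ∀ i ∈ {i | (support (g i) ∩ V).Nonempty},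
      dist (g i y) (g i x) < ε / 2 :=
    (eventually_all_finite hfin).mpr fun i _ =>
      (hg i).continuousAt.eventually (Metric.ball_mem_nhds _ (half_pos hε))
  filter_upwards [hnear, hV] with y hy hyV
  rw [dist_eq_norm]
  refine (lp.norm_le_of_forall_le (half_pos hε).le fun i => ?_).trans_lt (half_lt_self hε)
  rw [lp.coeFn_sub, Pi.sub_apply, ← dist_eq_norm]
  by_cases hi : (support (g i) ∩ V).Nonempty
  · exact (hy i hi).le
  · have hzero : ∀ z ∈ V, g i z = 0 := fun z hz => notMem_support.mp fun hzi => hi ⟨z, hzi, hz⟩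
    change dist (g i y) (g i x) ≤ ε / 2
    rw [hzero y hyV, hzero x (mem_of_mem_nhds hV), dist_self]
    exact (half_pos hε).le

theorem TopologicalSpace.IsTopologicalBasis.exists_mem_interior_sUnion_closure [RegularSpace X]
    {f : ℕ → Set (Set X)} (hb : IsTopologicalBasis (⋃ n, f n)) {x : X} {U : Set X}
    (hU : IsOpen U) (hx : x ∈ U) : ∃ n, x ∈ interior (⋃₀ {A ∈ closure '' f n | A ⊆ U}) := by
  obtain ⟨W, hW, hWc, hWU⟩ := exists_mem_nhds_isClosed_subset (hU.mem_nhds hx)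
  obtain ⟨B, hB, hxB, hBW⟩ := hb.mem_nhds_iff.mp hW
  obtain ⟨n, hBn⟩ := mem_iUnion.mp hB
  have hBU : closure B ∈ {A ∈ closure '' f n | A ⊆ U} :=
    ⟨⟨B, hBn, rfl⟩, (closure_minimal hBW hWc).trans hWU⟩
  exact ⟨n, interior_maximal (subset_closure.trans (subset_sUnion_of_mem hBU)) (hb.isOpen hB) hxB⟩

theorem normalSpace_of_isTopologicalBasis_iUnion [RegularSpace X] {f : ℕ → Set (Set X)}
    (hb : IsTopologicalBasis (⋃ n, f n)) (hf : ∀ n, IsLocallyFiniteFamily (f n)) :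
    NormalSpace X :=
  normalSpace_of_forall_mem_interior_sUnion (fun n => (hf n).image_closure)
    (fun _ => forall_mem_image.mpr fun _ _ => isClosed_closure)
    fun _ _ hU hx => hb.exists_mem_interior_sUnion_closure hU hx

/-- Nagata–Smirnov. For `B ∈ f n`, take the Urysohn function vanishing off `B` and equal to `1` on
the union of the `closure B'` with `B' ∈ f m`, `closure B' ⊆ B`. For fixed `(n, m)` these form a
locally finite family, hence a continuous map into `ℓ^∞`; together these maps embed `X` into a
countable product of metric spaces. -/
theorem metrizableSpace_of_isSigmaLocallyFinite_basis [RegularSpace X] [T0Space X]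
    {𝓑 : Set (Set X)} (hb : IsTopologicalBasis 𝓑) (hσ : IsSigmaLocallyFinite 𝓑) :
    MetrizableSpace X := by
  obtain ⟨f, hf, rfl⟩ := hσ
  have := normalSpace_of_isTopologicalBasis_iUnion hb hf
  set E : ℕ → Set X → Set X := fun m B => ⋃₀ {A ∈ closure '' f m | A ⊆ B}
  have hEc : ∀ m B, IsClosed (E m B) := fun m B =>
    ((hf m).image_closure.mono fun A hA => hA.1).isClosed_sUnion fun A hA =>
      forall_mem_image.mpr (fun _ _ => isClosed_closure) A hA.1
  choose g hg0 hg1 hg01 using fun (p : ℕ × ℕ) (B : f p.1) =>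
    exists_continuous_zero_one_of_isClosed (hb.isOpen (mem_iUnion_of_mem p.1 B.2)).isClosed_compl
      (hEc p.2 B) (disjoint_compl_left_iff_subset.mpr (sUnion_subset fun A hA => hA.2))
  choose Φ hΦ hΦg using fun p : ℕ × ℕ => exists_continuous_lp_infty_of_locallyFinite
    (g := fun B : f p.1 => g p B) (fun B => (g p B).continuous)
    (fun B x => abs_le.mpr ⟨by linarith [(hg01 p B x).1], by linarith [(hg01 p B x).2]⟩)
    ((isLocallyFiniteFamily_iff.mp (hf p.1)).subset fun B x hx =>
      by_contra fun hxB => hx (hg0 p B hxB))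
  refine IsInducing.isEmbedding (f := fun x p => Φ p x) ?_ |>.metrizableSpace
  refine isInducing_iff_nhds.mpr fun x => le_antisymm
    ((continuous_pi hΦ).tendsto x).le_comap ((nhds_basis_opens x).ge_iff.mpr ?_)
  rintro U ⟨hxU, hU⟩
  obtain ⟨B, hB, hxB, hBU⟩ := hb.exists_subset_of_mem_open hxU hU
  obtain ⟨n, hBn⟩ := mem_iUnion.mp hB
  obtain ⟨m, hxm⟩ := hb.exists_mem_interior_sUnion_closure (hb.isOpen hB) hxB
  refine mem_comap.mpr ⟨_, (continuous_apply (n, m)).continuousAt.preimage_mem_nhds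
    (Metric.ball_mem_nhds _ one_pos), fun y hy => by_contra fun hyU => ?_⟩
  have hdist := (lp.norm_apply_le_norm ENNReal.top_ne_zero (Φ (n, m) y - Φ (n, m) x)
    ⟨B, hBn⟩).trans_lt (mem_ball_iff_norm.mp hy)
  simp only [lp.coeFn_sub, Pi.sub_apply, hΦg, hg1 (n, m) ⟨B, hBn⟩ (interior_subset hxm),
    hg0 (n, m) ⟨B, hBn⟩ fun hyB => hyU (hBU hyB)] at hdist
  norm_num at hdist

end NagataSmirnov

section KNetwork

variable {X : Type*} [TopologicalSpace X]

theorem IsKNetwork.image_closure [RegularSpace X] {N : Set (Set X)} (hN : IsKNetwork N) :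
    IsKNetwork (closure '' N) := by
  intro K U hK hU hKU
  obtain ⟨V, hV, hKV, hVU⟩ := hK.exists_isOpen_closure_subset (hU.mem_nhdsSet.mpr hKU)
  obtain ⟨F, hFN, hF, hKF, hFV⟩ := hN K V hK hV hKV
  refine ⟨closure '' F, image_mono hFN, hF.image _, ?_, ?_⟩
  · exact hKF.trans (sUnion_mono_subsets fun _ => subset_closure)
  · rintro y ⟨_, ⟨A, hA, rfl⟩, hy⟩
    exact hVU (closure_mono ((subset_sUnion_of_mem hA).trans hFV) hy)

theorem IsKNetwork.exists_mem_subset {N : Set (Set X)} (hN : IsKNetwork N) {x : X} {U : Set X}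
    (hU : IsOpen U) (hx : x ∈ U) : ∃ A ∈ N, x ∈ A ∧ A ⊆ U := by
  obtain ⟨F, hFN, -, hxF, hFU⟩ := hN {x} U isCompact_singleton hU (singleton_subset_iff.mpr hx)
  obtain ⟨A, hA, hxA⟩ := hxF rfl
  exact ⟨A, hFN hA, hxA, (subset_sUnion_of_mem hA).trans hFU⟩

theorem IsKNetwork.exists_frequently_mem {N : Set (Set X)} (hN : IsKNetwork N)
    (hcl : ∀ A ∈ N, IsClosed A) {x : X} {U : Set X} (hU : IsOpen U) (hx : x ∈ U)
    {z : ℕ → X} (hz : Tendsto z atTop (𝓝 x)) :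
    ∃ A ∈ N, x ∈ A ∧ A ⊆ U ∧ ∃ᶠ k in atTop, z k ∈ A := by
  obtain ⟨k₀, hk₀⟩ := (hz.eventually (hU.mem_nhds hx)).exists_forall_of_atTop
  have hshift : Tendsto (· + k₀) atTop atTop := tendsto_add_atTop_nat k₀
  have hz' : Tendsto (fun k => z (k + k₀)) atTop (𝓝 x) := hz.comp hshift
  have hsub : insert x (range fun k => z (k + k₀)) ⊆ U := by
    rintro y (rfl | ⟨k, rfl⟩)
    exacts [hx, hk₀ _ (Nat.le_add_left _ _)]
  obtain ⟨F, hFN, hF, hcov, hFU⟩ := hN _ U hz'.isCompact_insert_range hU hsub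
  have hall : ∀ᶠ k in atTop, ∃ A ∈ F, z (k + k₀) ∈ A :=
    Eventually.of_forall fun k => hcov (mem_insert_of_mem _ ⟨k, rfl⟩)
  obtain ⟨A, hAF, hA⟩ := hF.frequently_exists.mp hall.frequently
  have hAfreq : ∃ᶠ k in atTop, z k ∈ A := hshift.frequently hA
  exact ⟨A, hFN hAF, (hcl A (hFN hAF)).mem_of_frequently_of_tendsto hAfreq hz,
    (subset_sUnion_of_mem hAF).trans hFU, hAfreq⟩

end KNetwork

structure IsClosedSigmaKNetwork {X : Type*} [TopologicalSpace X] (M : ℕ → Set (Set X)) :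
    Prop where
  locallyFinite : ∀ n, IsLocallyFiniteFamily (M n)
  isClosed : ∀ n, ∀ A ∈ M n, IsClosed A
  mono : Monotone M
  isKNetwork : IsKNetwork (⋃ n, M n)

theorem IsAlephSpace.exists_isClosedSigmaKNetwork {X : Type*} [TopologicalSpace X]
    (hX : IsAlephSpace X) : ∃ M : ℕ → Set (Set X), IsClosedSigmaKNetwork M := by
  obtain ⟨_, -, N, ⟨f, hf, rfl⟩, hN⟩ := hX
  refine ⟨fun n => closure '' accumulate f n, ⟨fun n => ?_, ?_, ?_, ?_⟩⟩
  · exact (IsLocallyFiniteFamily.biUnion (finite_Iic n) fun i _ => hf i).image_closure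
  · exact fun _ => forall_mem_image.mpr fun _ _ => isClosed_closure
  · exact fun a b hab => image_mono (monotone_accumulate hab)
  · simpa only [← image_iUnion, iUnion_accumulate] using hN.image_closure

namespace IsClosedSigmaKNetwork

variable {X : Type*} [TopologicalSpace X] {M : ℕ → Set (Set X)}

theorem isClosed_of_mem_iUnion (hM : IsClosedSigmaKNetwork M) : ∀ A ∈ ⋃ n, M n, IsClosed A :=
  fun A hA => let ⟨n, hAn⟩ := mem_iUnion.mp hA; hM.isClosed n A hAn

theorem isClosed_sUnion_of_subset (hM : IsClosedSigmaKNetwork M) {n : ℕ} {𝒮 : Set (Set X)}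
    (h𝒮 : 𝒮 ⊆ M n) : IsClosed (⋃₀ 𝒮) :=
  ((hM.locallyFinite n).mono h𝒮).isClosed_sUnion fun A hA => hM.isClosed n A (h𝒮 hA)

theorem exists_isClosed_iUnion_eq (hM : IsClosedSigmaKNetwork M) {U : Set X} (hU : IsOpen U) :
    ∃ C : ℕ → Set X, (∀ j, IsClosed (C j)) ∧ ⋃ j, C j = U := by
  refine ⟨fun j => ⋃₀ {A ∈ M j | A ⊆ U}, fun j => hM.isClosed_sUnion_of_subset fun A hA => hA.1,
    (iUnion_subset fun j => sUnion_subset fun A hA => hA.2).antisymm fun x hx => ?_⟩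
  obtain ⟨A, hA, hxA, hAU⟩ := hM.isKNetwork.exists_mem_subset hU hx
  obtain ⟨j, hAj⟩ := mem_iUnion.mp hA
  exact mem_iUnion.mpr ⟨j, A, ⟨hAj, hAU⟩, hxA⟩

/-- Otherwise Fréchet–Urysohn gives sequences `u m → x` avoiding the `m`-th union, (α₄) a
diagonal sequence `u (m k) (n k) → x` with `m k → ∞`, and some `A ∈ M i` through `x` inside `U`
contains a term `u (m k) (n k)` with `m k ≥ i`, which then lies in the `m k`-th union by
monotonicity. -/
theorem exists_sUnion_mem_nhds [FrechetUrysohnSpace X] (hα : Alpha4Space X)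
    (hM : IsClosedSigmaKNetwork M) {x : X} {U : Set X} (hU : IsOpen U) (hx : x ∈ U) :
    ∃ p, ⋃₀ {A ∈ M p | x ∈ A ∧ A ⊆ U} ∈ 𝓝 x := by
  by_contra! h
  have hcl : ∀ m, x ∈ closure (⋃₀ {A ∈ M m | x ∈ A ∧ A ⊆ U})ᶜ := fun m => by
    rw [closure_compl, mem_compl_iff, mem_interior_iff_mem_nhds]
    exact h m
  choose u hu hux using fun m => mem_closure_iff_seq_limit.mp (hcl m)
  obtain ⟨m, n, hm, hlim⟩ := hα x u hux
  obtain ⟨A, hA, hxA, hAU, hfreq⟩ :=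
    hM.isKNetwork.exists_frequently_mem hM.isClosed_of_mem_iUnion hU hx hlim
  obtain ⟨i, hAi⟩ := mem_iUnion.mp hA
  obtain ⟨k, hkA, hik⟩ :=
    (hfreq.and_eventually (hm.nat_tendsto_atTop.eventually_ge_atTop i)).exists
  exact hu (m k) (n k) ⟨A, ⟨hM.mono hik hAi, hxA, hAU⟩, hkA⟩

theorem normalSpace [FrechetUrysohnSpace X] (hα : Alpha4Space X)
    (hM : IsClosedSigmaKNetwork M) : NormalSpace X := by
  refine normalSpace_of_forall_mem_interior_sUnion hM.locallyFinite hM.isClosed ?_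
  intro x U hU hx
  obtain ⟨p, hp⟩ := hM.exists_sUnion_mem_nhds hα hU hx
  refine ⟨p, interior_mono ?_ (mem_interior_iff_mem_nhds.mpr hp)⟩
  exact sUnion_subset_sUnion fun A hA => ⟨hA.1, hA.2.2⟩

theorem exists_pairwise_disjoint_isOpen [FrechetUrysohnSpace X] (hα : Alpha4Space X)
    (hM : IsClosedSigmaKNetwork M) {ι : Type*} {D : ι → Set X} (hD : LocallyFinite D)
    (hDc : ∀ i, IsClosed (D i)) (hDd : Pairwise (Disjoint on D)) :
    ∃ G : ι → Set X, (∀ i, IsOpen (G i) ∧ D i ⊆ G i) ∧ Pairwise (Disjoint on G) := by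
  set 𝒜 : ι → ℕ → Set (Set X) := fun i p =>
    {A ∈ M p | (A ∩ D i).Nonempty ∧ ∀ j ≠ i, Disjoint A (D j)}
  refine exists_pairwise_disjoint_isOpen_of_layers (H := fun i p => ⋃₀ 𝒜 i p) (fun q y => ?_)
    (fun i q => hM.isClosed_sUnion_of_subset fun A hA => hA.1) (fun i x hx => ?_)
    (fun i j q hij => disjoint_sUnion_left.mpr fun A hA => hA.2.2 i hij)
  · obtain ⟨V, hV, hfin⟩ := hM.locallyFinite q y
    refine ⟨V, hV, (hfin.biUnion fun A _ => ?_).subset fun i ⟨z, ⟨A, hA, hzA⟩, hzV⟩ =>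
      mem_biUnion ⟨hA.1, z, hzA, hzV⟩ (show i ∈ {i | A ∈ 𝒜 i q} from hA)⟩
    refine Subsingleton.finite fun i hi j hj => by_contra fun hij => ?_
    obtain ⟨z, hzA, hzD⟩ := hi.2.1
    exact disjoint_left.mp (hj.2.2 i hij) hzA hzD
  · set U := (⋃ j : {j // j ≠ i}, D j)ᶜ
    have hU : IsOpen U := isOpen_compl_iff.mpr
      ((hD.comp_injective Subtype.val_injective).isClosed_iUnion fun j => hDc j)
    have hxU : x ∈ U := fun hx' => by
      obtain ⟨⟨j, hji⟩, hxj⟩ := mem_iUnion.mp hx'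
      exact disjoint_left.mp (hDd hji) hxj hx
    obtain ⟨p, hp⟩ := hM.exists_sUnion_mem_nhds hα hU hxU
    refine mem_iUnion.mpr ⟨p, interior_mono ?_ (mem_interior_iff_mem_nhds.mpr hp)⟩
    refine sUnion_subset_sUnion fun A ⟨hAM, hxA, hAU⟩ => ⟨hAM, ⟨x, hxA, hx⟩, fun j hji => ?_⟩
    exact disjoint_left.mpr fun z hzA hzj => hAU hzA (mem_iUnion.mpr ⟨⟨j, hji⟩, hzj⟩)

theorem exists_locallyFinite_isOpen_expansion [FrechetUrysohnSpace X] (hα : Alpha4Space X)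
    (hM : IsClosedSigmaKNetwork M) {ι : Type*} {D V : ι → Set X} (hD : LocallyFinite D)
    (hDc : ∀ i, IsClosed (D i)) (hDd : Pairwise (Disjoint on D)) (hV : ∀ i, IsOpen (V i))
    (hDV : ∀ i, D i ⊆ V i) :
    ∃ O : ι → Set X, (∀ i, IsOpen (O i) ∧ D i ⊆ O i ∧ O i ⊆ V i) ∧ LocallyFinite O := by
  have := hM.normalSpace hα
  obtain ⟨G, hG, hGd⟩ := hM.exists_pairwise_disjoint_isOpen hα hD hDc hDd
  exact _root_.exists_locallyFinite_isOpen_expansion hD hDc hG hGd hV hDV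

theorem exists_sigmaLocallyFinite_refinement [FrechetUrysohnSpace X] (hα : Alpha4Space X)
    (hM : IsClosedSigmaKNetwork M) {𝒰 : Set (Set X)} (h𝒰 : ∀ U ∈ 𝒰, IsOpen U)
    (hcov : ⋃₀ 𝒰 = univ) :
    ∃ 𝒲 : Set (Set X), IsSigmaLocallyFinite 𝒲 ∧ (∀ W ∈ 𝒲, IsOpen W ∧ ∃ U ∈ 𝒰, W ⊆ U) ∧
      ⋃₀ 𝒲 = univ := by
  set ℛ : ℕ → Set (Set X) := fun m => {A ∈ M m | ∃ U ∈ 𝒰, A ⊆ U}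
  choose 𝒟 h𝒟lf h𝒟d h𝒟 h𝒟cov using fun m =>
    ((hM.locallyFinite m).mono fun A (hA : A ∈ ℛ m) => hA.1).exists_sigmaDiscrete_refinement
      (fun A hA => hM.isClosed m A hA.1) fun U hU => hM.exists_isClosed_iUnion_eq hU
  have hexp : ∀ m k j, ∃ O : 𝒟 m k j → Set X,
      (∀ D, IsOpen (O D) ∧ (D : Set X) ⊆ O D ∧ ∃ U ∈ 𝒰, O D ⊆ U) ∧ LocallyFinite O := by
    intro m k j
    have hV : ∀ D : 𝒟 m k j, ∃ U ∈ 𝒰, (D : Set X) ⊆ U := fun D => by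
      obtain ⟨-, A, ⟨-, U, hU, hAU⟩, hDA⟩ := h𝒟 m k j D D.2
      exact ⟨U, hU, hDA.trans hAU⟩
    choose V hV𝒰 hDV using hV
    obtain ⟨O, hO, hOlf⟩ := hM.exists_locallyFinite_isOpen_expansion hα
      (isLocallyFiniteFamily_iff.mp (h𝒟lf m k j)) (fun D => (h𝒟 m k j D D.2).1)
      ((pairwise_subtype_iff_pairwise_set _ _).mpr (h𝒟d m k j)) (fun D => h𝒰 _ (hV𝒰 D)) hDV
    exact ⟨O, fun D => ⟨(hO D).1, (hO D).2.1, V D, hV𝒰 D, (hO D).2.2⟩, hOlf⟩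
  choose O hO hOlf using hexp
  refine ⟨⋃ (m) (k) (j), range (O m k j), .iUnion fun m => .iUnion fun k => .iUnion fun j =>
    (hOlf m k j).isLocallyFiniteFamily_range.isSigmaLocallyFinite, ?_, ?_⟩
  · simp only [mem_iUnion, mem_range]
    rintro _ ⟨m, k, j, D, rfl⟩
    exact ⟨(hO m k j D).1, (hO m k j D).2.2⟩
  · refine eq_univ_of_forall fun x => ?_
    obtain ⟨U, hU, hxU⟩ := mem_sUnion.mp (hcov.symm ▸ mem_univ x)
    obtain ⟨A, hA, hxA, hAU⟩ := hM.isKNetwork.exists_mem_subset (h𝒰 U hU) hxU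
    obtain ⟨m, hAm⟩ := mem_iUnion.mp hA
    obtain ⟨k, j, D, hD, hxD⟩ := mem_iUnion₂.mp (h𝒟cov m ⟨A, ⟨hAm, U, hU, hAU⟩, hxA⟩)
    exact ⟨O m k j ⟨D, hD⟩, mem_iUnion.mpr ⟨m, mem_iUnion₂.mpr ⟨k, j, mem_range_self _⟩⟩,
      (hO m k j ⟨D, hD⟩).2.1 hxD⟩

/-- Refine, for each level `n`, the cover by open sets meeting finitely many members of `M n`; a
basic set is a piece `W` of the refinement cut down to the interior of a union of such members. -/
theorem exists_sigmaLocallyFinite_basis [FrechetUrysohnSpace X] (hα : Alpha4Space X)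
    (hM : IsClosedSigmaKNetwork M) :
    ∃ 𝓑 : Set (Set X), IsTopologicalBasis 𝓑 ∧ IsSigmaLocallyFinite 𝓑 := by
  set 𝒰 : ℕ → Set (Set X) := fun n => {V | IsOpen V ∧ {A ∈ M n | (A ∩ V).Nonempty}.Finite}
  have h𝒰 : ∀ n, ⋃₀ 𝒰 n = univ := fun n => eq_univ_of_forall fun x => by
    obtain ⟨V, hV, hfin⟩ := hM.locallyFinite n x
    obtain ⟨t, htV, ht, hxt⟩ := mem_nhds_iff.mp hV
    exact ⟨t, ⟨ht, hfin.subset fun A hA => ⟨hA.1, hA.2.mono (inter_subset_inter_right A htV)⟩⟩, hxt⟩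
  choose 𝒲 h𝒲 h𝒲U h𝒲cov using fun n => hM.exists_sigmaLocallyFinite_refinement hα
    (fun V hV => hV.1) (h𝒰 n)
  set 𝒞 : ℕ → Set X → Set (Set X) := fun n W =>
    (fun F => W ∩ interior (⋃₀ F)) '' 𝒫 {A ∈ M n | (A ∩ W).Nonempty}
  refine ⟨⋃ (n) (W ∈ 𝒲 n), 𝒞 n W, isTopologicalBasis_of_isOpen_of_nhds ?_ ?_,
    .iUnion fun n => (h𝒲 n).biUnion_of_subset (fun W hW => ?_) ?_⟩
  · simp only [mem_iUnion]
    rintro _ ⟨n, W, hW, F, -, rfl⟩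
    exact (h𝒲U n W hW).1.inter isOpen_interior
  · intro x U hxU hU
    obtain ⟨n, hn⟩ := hM.exists_sUnion_mem_nhds hα hU hxU
    obtain ⟨W, hW, hxW⟩ := mem_sUnion.mp ((h𝒲cov n).symm ▸ mem_univ x)
    refine ⟨W ∩ interior (⋃₀ {A ∈ M n | x ∈ A ∧ A ⊆ U}), mem_iUnion.mpr ⟨n, mem_iUnion₂.mpr
      ⟨W, hW, _, fun A hA => ⟨hA.1, x, hA.2.1, hxW⟩, rfl⟩⟩,
      ⟨hxW, mem_interior_iff_mem_nhds.mpr hn⟩, ?_⟩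
    exact inter_subset_right.trans (interior_subset.trans (sUnion_subset fun A hA => hA.2.2))
  · obtain ⟨-, V, ⟨-, hVfin⟩, hWV⟩ := h𝒲U n W hW
    refine (Finite.finite_subsets (hVfin.subset fun A hA => ?_)).image _
    exact ⟨hA.1, hA.2.mono (inter_subset_inter_right A hWV)⟩
  · rintro W - _ ⟨F, -, rfl⟩
    exact inter_subset_left

end IsClosedSigmaKNetwork

theorem Alpha4Space.of_firstCountableTopology (X : Type*) [TopologicalSpace X]
    [FirstCountableTopology X] : Alpha4Space X := by
  intro x u hu
  obtain ⟨b, hb⟩ := (𝓝 x).exists_antitone_basis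
  choose n hn using fun k => ((hu k).eventually (hb.mem k)).exists
  refine ⟨id, n, injective_id, hb.tendsto_right_iff.mpr fun i _ => ?_⟩
  filter_upwards [eventually_ge_atTop i] with k hk
  exact hb.antitone hk (hn k)

/-- An ℵ-space is metrizable iff it is a Fréchet–Urysohn (α₄)-space. -/
theorem alephSpace_metrizable_iff_frechetUrysohn_alpha4
    (X : Type*) [TopologicalSpace X] (hX : IsAlephSpace X) :
    TopologicalSpace.MetrizableSpace X ↔ (FrechetUrysohnSpace X ∧ Alpha4Space X) := by
  refine ⟨fun _ => ⟨inferInstance, .of_firstCountableTopology X⟩, fun ⟨_, hα⟩ => ?_⟩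
  have : RegularSpace X := hX.1
  have : T2Space X := hX.2.1
  obtain ⟨M, hM⟩ := hX.exists_isClosedSigmaKNetwork
  obtain ⟨𝓑, hb, hσ⟩ := hM.exists_sigmaLocallyFinite_basis hα
  exact metrizableSpace_of_isSigmaLocallyFinite_basis hb hσ
end

section
/- Let Γ be an infinite set, let 1 < p < ∞, and let E = ℓ_p(Γ). Then every family 𝒰 of neighborhoods of 0 in the weak topology σ(E,E′) with ⋂𝒰 = {0} has cardinality at least |Γ|; that is, the pseudocharacter of (E, σ(E,E′)) is at least |Γ|. In particular, for uncountable Γ the space (ℓ_p(Γ), σ(E,E′)) does not have countable pseudocharacter. -/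
open TopologicalSpace Filter Set

/-! A weak neighbourhood of `0` contains the common kernel of finitely many continuous functionals,
so fewer than `|Γ|` neighbourhoods involve fewer than `|Γ|` functionals. These still have a common
nonzero zero: for finitely many because `ℓ_p(Γ)` has dimension at least `|Γ|`, for infinitely many
because, when `p > 1`, every functional `f` vanishes at all but countably many unit vectors `e_γ`.
Indeed, if `|f e_γ| ≥ δ` for `γ ∈ T`, testing `f` on `∑_{γ ∈ T} ± e_γ`, of norm at most `|T|^{1/p}`,
gives `|T| δ ≤ ‖f‖ |T|^{1/p}`, which bounds `|T|`. -/

open Cardinal Topology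
open scoped ENNReal

namespace Cardinal

universe u

theorem mk_iUnion_le_of_countable {ι α : Type u} [Infinite ι] {s : ι → Set α}
    (hs : ∀ i, (s i).Countable) : #(⋃ i, s i) ≤ #ι :=
  calc #(⋃ i, s i) ≤ #ι * ⨆ i, #(s i) := mk_iUnion_le s
    _ ≤ #ι * ℵ₀ := by gcongr; exact ciSup_le' fun i => le_aleph0_iff_set_countable.mpr (hs i)
    _ = #ι := mul_aleph0_eq (aleph0_le_mk ι)

theorem mk_iUnion_lt_of_finite {ι α β : Type u} [Infinite β] {s : ι → Set α}
    (hs : ∀ i, (s i).Finite) (hι : #ι < #β) : #(⋃ i, s i) < #β := by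
  cases finite_or_infinite ι
  · exact (lt_aleph0_iff_set_finite.mpr (finite_iUnion hs)).trans_le (aleph0_le_mk β)
  · exact (mk_iUnion_le_of_countable fun i => (hs i).countable).trans_lt hι

end Cardinal

theorem WeakBilin.exists_finset_forall_eq_zero_subset {𝕜 E F : Type*} [NormedField 𝕜]
    [AddCommGroup E] [Module 𝕜 E] [AddCommGroup F] [Module 𝕜 F]
    {B : E →ₗ[𝕜] F →ₗ[𝕜] 𝕜} {U : Set (WeakBilin B)} (hU : U ∈ 𝓝 0) :
    ∃ s : Finset F, {x : WeakBilin B | ∀ y ∈ s, B x y = 0} ⊆ U := by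
  obtain ⟨s, r, hr, hball⟩ := (LinearMap.weakBilin_withSeminorms B).mem_nhds_iff 0 U |>.mp hU
  refine ⟨s, fun x hx => hball ?_⟩
  rw [Seminorm.mem_ball_zero]
  exact Seminorm.finset_sup_apply_lt hr fun y hy => by
    change ‖B x y‖ < r
    rwa [hx y hy, norm_zero]

theorem exists_ne_zero_forall_eq_zero_of_card_lt_rank {K V ι : Type*} [Field K]
    [AddCommGroup V] [Module K V] [Finite ι] (f : ι → V →ₗ[K] K)
    (h : (Nat.card ι : Cardinal) < Module.rank K V) : ∃ x ≠ 0, ∀ i, f i x = 0 := by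
  by_contra! hker
  have hinj : Function.Injective (LinearMap.pi f) := by
    rw [← LinearMap.ker_eq_bot, LinearMap.ker_eq_bot']
    intro x hx
    by_contra hx0
    obtain ⟨i, hi⟩ := hker x hx0
    exact hi (congrFun hx i)
  have := Fintype.ofFinite ι
  have hrank := LinearMap.lift_rank_le_of_injective _ hinj
  rw [rank_fun', Cardinal.lift_natCast, Cardinal.lift_le_nat_iff,
    ← Nat.card_eq_fintype_card] at hrank
  exact h.not_ge hrank

namespace lp

variable {Γ : Type*} {p : ℝ≥0∞}

theorem linearIndependent_single_one {𝕜 : Type*} [NormedField 𝕜] [DecidableEq Γ] :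
    LinearIndependent 𝕜 fun γ : Γ => lp.single p γ (1 : 𝕜) :=
  .of_comp (lpSubmodule 𝕜 (fun _ : Γ => 𝕜) p).subtype (Pi.linearIndependent_single_one Γ 𝕜)

variable [Fact (1 ≤ p)]

section single

variable [DecidableEq Γ]

-- For `p = ∞` the exponent `p.toReal⁻¹` is the junk value `0⁻¹ = 0`, which is the right one.
theorem norm_sum_single_le (s : Finset Γ) {c : Γ → ℝ} (hc : ∀ γ, ‖c γ‖ ≤ 1) :
    ‖∑ γ ∈ s, lp.single p γ (c γ)‖ ≤ (s.card : ℝ) ^ p.toReal⁻¹ := by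
  rcases eq_or_ne p ∞ with rfl | hp
  · rw [ENNReal.toReal_top, inv_zero, Real.rpow_zero]
    refine lp.norm_le_of_forall_le zero_le_one fun γ => ?_
    simp only [lp.coeFn_sum, Finset.sum_apply, lp.coeFn_single, Finset.sum_pi_single]
    split_ifs
    exacts [hc γ, by simp]
  · have hr : 0 < p.toReal := ENNReal.toReal_pos (zero_lt_one.trans_le Fact.out).ne' hp
    have hpow : ‖∑ γ ∈ s, lp.single p γ (c γ)‖ ^ p.toReal ≤ s.card := by
      rw [lp.norm_sum_single hr]
      calc ∑ γ ∈ s, ‖c γ‖ ^ p.toReal ≤ ∑ _γ ∈ s, (1 : ℝ) := by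
            gcongr with γ; exact Real.rpow_le_one (norm_nonneg _) (hc γ) hr.le
        _ = s.card := by simp
    calc ‖∑ γ ∈ s, lp.single p γ (c γ)‖
        = (‖∑ γ ∈ s, lp.single p γ (c γ)‖ ^ p.toReal) ^ p.toReal⁻¹ :=
          (Real.rpow_rpow_inv (norm_nonneg _) hr.ne').symm
      _ ≤ (s.card : ℝ) ^ p.toReal⁻¹ := by gcongr

theorem card_mul_le_opNorm_mul_card_rpow (f : lp (fun _ : Γ => ℝ) p →L[ℝ] ℝ) {δ : ℝ}
    {s : Finset Γ} (hs : ∀ γ ∈ s, δ ≤ |f (lp.single p γ 1)|) :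
    s.card * δ ≤ ‖f‖ * (s.card : ℝ) ^ p.toReal⁻¹ := by
  set c : Γ → ℝ := fun γ => SignType.sign (f (lp.single p γ 1))
  have hfc : ∀ γ, f (lp.single p γ (c γ)) = |f (lp.single p γ 1)| := fun γ => by
    rw [← mul_one (c γ), ← smul_eq_mul, lp.single_smul, map_smul, smul_eq_mul, sign_mul_self]
  have hc : ∀ γ, ‖c γ‖ ≤ 1 := fun γ => by
    rcases SignType.trichotomy (SignType.sign (f (lp.single p γ 1))) with h | h | h <;>
      simp [c, h]
  calc s.card * δ = ∑ _γ ∈ s, δ := by simp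
    _ ≤ ∑ γ ∈ s, f (lp.single p γ (c γ)) :=
      Finset.sum_le_sum fun γ hγ => (hfc γ).symm ▸ hs γ hγ
    _ = f (∑ γ ∈ s, lp.single p γ (c γ)) := (map_sum f _ s).symm
    _ ≤ ‖f‖ * ‖∑ γ ∈ s, lp.single p γ (c γ)‖ := (le_abs_self _).trans (f.le_opNorm _)
    _ ≤ ‖f‖ * (s.card : ℝ) ^ p.toReal⁻¹ := by gcongr; exact norm_sum_single_le s hc

theorem finite_setOf_le_abs_apply_single (hp : 1 < p) (f : lp (fun _ : Γ => ℝ) p →L[ℝ] ℝ)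
    {δ : ℝ} (hδ : 0 < δ) : {γ | δ ≤ |f (lp.single p γ 1)|}.Finite := by
  have hθ : p.toReal⁻¹ < 1 := by
    rcases eq_or_ne p ∞ with rfl | hpt
    · simp
    · refine inv_lt_one_of_one_lt₀ ?_
      rwa [← ENNReal.toReal_one, ENNReal.toReal_lt_toReal ENNReal.one_ne_top hpt]
  by_contra hinf
  have hbound : ∀ n : ℕ, 0 < n → (n : ℝ) ^ (1 - p.toReal⁻¹) * δ ≤ ‖f‖ := by
    intro n hn
    obtain ⟨s, hsub, rfl⟩ := Set.Infinite.exists_subset_card_eq hinf n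
    have hpos : (0 : ℝ) < s.card := by exact_mod_cast hn
    rw [Real.rpow_sub hpos, Real.rpow_one, div_mul_eq_mul_div, div_le_iff₀ (by positivity)]
    exact card_mul_le_opNorm_mul_card_rpow f fun γ hγ => hsub hγ
  have htend : Tendsto (fun n : ℕ => (n : ℝ) ^ (1 - p.toReal⁻¹) * δ) atTop atTop :=
    ((tendsto_rpow_atTop (sub_pos.mpr hθ)).comp tendsto_natCast_atTop_atTop).atTop_mul_const hδ
  obtain ⟨n, hlarge, hn⟩ :=
    ((htend.eventually_gt_atTop ‖f‖).and (eventually_gt_atTop 0)).exists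
  exact (hbound n hn).not_gt hlarge

theorem countable_setOf_apply_single_ne_zero (hp : 1 < p)
    (f : lp (fun _ : Γ => ℝ) p →L[ℝ] ℝ) : {γ | f (lp.single p γ 1) ≠ 0}.Countable := by
  have hsub : {γ | f (lp.single p γ 1) ≠ 0} ⊆
      ⋃ n : ℕ, {γ | 1 / (n + 1 : ℝ) ≤ |f (lp.single p γ 1)|} := fun γ hγ =>
    mem_iUnion.mpr ((exists_nat_one_div_lt (abs_pos.mpr hγ)).imp fun _ => le_of_lt)
  exact (countable_iUnion fun n =>
    (finite_setOf_le_abs_apply_single hp f (by positivity)).countable).mono hsub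

end single

theorem exists_ne_zero_forall_eq_zero_of_mk_lt (hp : 1 < p)
    {F : Set (lp (fun _ : Γ => ℝ) p →L[ℝ] ℝ)} (hF : #F < #Γ) : ∃ x ≠ 0, ∀ f ∈ F, f x = 0 := by
  classical
  rcases F.finite_or_infinite with hfin | hinf
  · have := hfin.to_subtype
    obtain ⟨x, hx0, hx⟩ := exists_ne_zero_forall_eq_zero_of_card_lt_rank
      (fun f : F => ((f : lp (fun _ : Γ => ℝ) p →L[ℝ] ℝ) : lp (fun _ : Γ => ℝ) p →ₗ[ℝ] ℝ))
      (Nat.cast_card.trans_lt (hF.trans_le linearIndependent_single_one.cardinal_le_rank))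
    exact ⟨x, hx0, fun f hf => hx ⟨f, hf⟩⟩
  · have := hinf.to_subtype
    have hS : #(⋃ f : F, {γ | (f : lp (fun _ : Γ => ℝ) p →L[ℝ] ℝ) (lp.single p γ 1) ≠ 0})
        < #Γ :=
      (mk_iUnion_le_of_countable fun f => countable_setOf_apply_single_ne_zero hp _).trans_lt hF
    obtain ⟨γ, hγ⟩ := (ne_univ_iff_exists_notMem _).mp
      (ne_of_apply_ne (fun s : Set Γ => #s) (hS.trans_eq mk_univ.symm).ne)
    refine ⟨lp.single p γ 1, linearIndependent_single_one.ne_zero γ, fun f hf => ?_⟩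
    by_contra hne
    exact hγ (mem_iUnion.mpr ⟨⟨f, hf⟩, hne⟩)

end lp

theorem lp_weak_pseudocharacter_ge_general (Γ : Type) [Infinite Γ] (p : ENNReal)
    (hp1 : 1 < p) :
    haveI : Fact (1 ≤ p) := ⟨hp1.le⟩
    (∀ 𝒰 : Set (Set (WeakSpace ℝ (lp (fun _ : Γ => ℝ) p))),
        (∀ U ∈ 𝒰, U ∈ nhds (0 : WeakSpace ℝ (lp (fun _ : Γ => ℝ) p))) →
        ⋂₀ 𝒰 = {0} → Cardinal.mk Γ ≤ Cardinal.mk 𝒰) ∧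
    (¬ Countable Γ →
      ¬ ∃ 𝒰 : Set (Set (WeakSpace ℝ (lp (fun _ : Γ => ℝ) p))),
          𝒰.Countable ∧ (∀ U ∈ 𝒰, IsOpen U) ∧ ⋂₀ 𝒰 = {0}) := by
  have : Fact (1 ≤ p) := ⟨hp1.le⟩
  have mk_le : ∀ 𝒰 : Set (Set (WeakSpace ℝ (lp (fun _ : Γ => ℝ) p))),
      (∀ U ∈ 𝒰, U ∈ 𝓝 0) → ⋂₀ 𝒰 = {0} → #Γ ≤ #𝒰 := by
    intro 𝒰 h𝒰 hInter
    by_contra! hlt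
    choose s hs using fun U : 𝒰 => WeakBilin.exists_finset_forall_eq_zero_subset (h𝒰 U U.2)
    obtain ⟨x, hx0, hx⟩ := lp.exists_ne_zero_forall_eq_zero_of_mk_lt hp1
      (mk_iUnion_lt_of_finite (fun U => (s U).finite_toSet) hlt)
    have hx𝒰 : x ∈ ⋂₀ 𝒰 := fun U hU => hs ⟨U, hU⟩ fun f hf => hx f (mem_iUnion_of_mem _ hf)
    exact hx0 (by rwa [hInter] at hx𝒰)
  refine ⟨mk_le, fun hΓ ⟨𝒰, hcount, hopen, hInter⟩ => hΓ (mk_le_aleph0_iff.mp ?_)⟩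
  have h0 : (0 : WeakSpace ℝ (lp (fun _ : Γ => ℝ) p)) ∈ ⋂₀ 𝒰 := hInter ▸ rfl
  exact (mk_le 𝒰 (fun U hU => (hopen U hU).mem_nhds (h0 U hU)) hInter).trans hcount.le_aleph0

/-- For an infinite set `Γ` and `1 < p < ∞`, every family of weak neighbourhoods of `0`
in `ℓ_p(Γ)` whose intersection is `{0}` has cardinality at least `|Γ|`. In particular,
for uncountable `Γ` the space `(ℓ_p(Γ), σ(E,E'))` does not have countable pseudocharacter. -/
theorem lp_weak_pseudocharacter_ge (Γ : Type) [Infinite Γ] (p : ENNReal)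
    (hp1 : 1 < p) (hpt : p < ⊤) :
    haveI : Fact (1 ≤ p) := ⟨hp1.le⟩
    (∀ 𝒰 : Set (Set (WeakSpace ℝ (lp (fun _ : Γ => ℝ) p))),
        (∀ U ∈ 𝒰, U ∈ nhds (0 : WeakSpace ℝ (lp (fun _ : Γ => ℝ) p))) →
        ⋂₀ 𝒰 = {0} → Cardinal.mk Γ ≤ Cardinal.mk 𝒰) ∧
    (¬ Countable Γ →
      ¬ ∃ 𝒰 : Set (Set (WeakSpace ℝ (lp (fun _ : Γ => ℝ) p))),
          𝒰.Countable ∧ (∀ U ∈ 𝒰, IsOpen U) ∧ ⋂₀ 𝒰 = {0}) :=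
  lp_weak_pseudocharacter_ge_general Γ p hp1
end

section
/- Let E be a nonzero real locally convex Hausdorff topological vector space. Then (E, σ(E,E′)) has countable pseudocharacter (i.e., there is a countable family of weakly open sets whose intersection is {0}) if and only if there exists an injective continuous linear map from (E, σ(E,E′)) into the product space ℝ^ℕ (equivalently, E admits a weaker separable metrizable locally convex topology). Moreover, if (E, σ(E,E′)) has countable pseudocharacter, then the cardinality of E equals the continuum 2^{ℵ₀}. -/
/-!
A weak neighbourhood of `0` contains the common kernel of finitely many functionals, so if `{0}`
is a countable intersection of weakly open sets, countably many functionals already separate the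
points of `E`; listing them gives an injective continuous linear map into `ℝ^ℕ`. Conversely `{0}`
is a Gδ in the metrizable space `ℝ^ℕ`, and its preimage under an injective continuous map is `{0}`.
Such an injection bounds `|E|` by `|ℝ^ℕ| = 𝔠`, while a line in `E` already has cardinality `𝔠`.
-/

open TopologicalSpace Filter Set

open Topology Function Cardinal

theorem isGδ_iff_exists_countable_sInter_eq {X : Type*} [TopologicalSpace X] {s : Set X} :
    IsGδ s ↔ ∃ 𝒰 : Set (Set X), 𝒰.Countable ∧ (∀ U ∈ 𝒰, IsOpen U) ∧ ⋂₀ 𝒰 = s :=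
  ⟨fun ⟨𝒰, hopen, hcount, hs⟩ => ⟨𝒰, hcount, hopen, hs.symm⟩,
    fun ⟨𝒰, hcount, hopen, hs⟩ => ⟨𝒰, hopen, hcount, hs.symm⟩⟩

theorem Continuous.isGδ_singleton_of_injective {X Y : Type*} [TopologicalSpace X]
    [TopologicalSpace Y] [FirstCountableTopology Y] [T1Space Y] {f : X → Y} (hf : Continuous f)
    (hinj : Injective f) (x : X) : IsGδ {x} := by
  simpa [← image_singleton, hinj.preimage_image] using (IsGδ.singleton (f x)).preimage hf

namespace WeakBilin

section Semiring

variable {𝕜 E F : Type*} [CommSemiring 𝕜] [TopologicalSpace 𝕜] [AddCommMonoid E] [Module 𝕜 E]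
  [AddCommMonoid F] [Module 𝕜 F] (B : E →ₗ[𝕜] F →ₗ[𝕜] 𝕜)

theorem exists_finite_forall_eq_zero_subset_of_mem_nhds_zero {U : Set (WeakBilin B)}
    (hU : U ∈ 𝓝 0) : ∃ S : Set F, S.Finite ∧ {x : WeakBilin B | ∀ y ∈ S, B x y = 0} ⊆ U := by
  rw [nhds_induced, Filter.mem_comap] at hU
  obtain ⟨V, hV, hVU⟩ := hU
  rw [nhds_pi, Filter.mem_pi] at hV
  obtain ⟨S, hS, t, ht, hSt⟩ := hV
  refine ⟨S, hS, fun x hx => hVU (hSt fun y hy => ?_)⟩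
  have h0 : B (0 : E) y ∈ t y := mem_of_mem_nhds (ht y)
  rwa [LinearMap.map_zero₂, ← hx y hy] at h0

theorem exists_seq_forall_eq_zero_of_isGδ_zero (h : IsGδ ({0} : Set (WeakBilin B))) :
    ∃ v : ℕ → F, ∀ x : WeakBilin B, (∀ n, B x (v n) = 0) → x = 0 := by
  obtain ⟨𝒰, hopen, hcount, h0⟩ := h
  have h0mem : ∀ U ∈ 𝒰, (0 : WeakBilin B) ∈ U :=
    fun U hU => sInter_subset_of_mem hU (h0 ▸ mem_singleton 0)
  choose S hSfin hS using fun U : 𝒰 =>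
    exists_finite_forall_eq_zero_subset_of_mem_nhds_zero B ((hopen U U.2).mem_nhds (h0mem U U.2))
  have : Countable 𝒰 := hcount.to_subtype
  -- `0` is added only to make the set nonempty; it imposes no condition.
  obtain ⟨v, hv⟩ := ((countable_iUnion fun U => (hSfin U).countable).insert 0).exists_eq_range
    (insert_nonempty 0 (⋃ U, S U))
  refine ⟨v, fun x hx => ?_⟩
  have hS' : ∀ U : 𝒰, ∀ y ∈ S U, B x y = 0 := fun U y hy => by
    obtain ⟨n, rfl⟩ : y ∈ range v := hv ▸ mem_insert_of_mem 0 (mem_iUnion_of_mem U hy)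
    exact hx n
  have : x ∈ ⋂₀ 𝒰 := fun U hU => hS ⟨U, hU⟩ (hS' ⟨U, hU⟩)
  rwa [← h0] at this

end Semiring

section Ring

variable {𝕜 E F : Type*} [CommRing 𝕜] [TopologicalSpace 𝕜] [AddCommGroup E] [Module 𝕜 E]
  [AddCommMonoid F] [Module 𝕜 F] (B : E →ₗ[𝕜] F →ₗ[𝕜] 𝕜)

theorem isGδ_zero_iff_exists_injective_continuousLinearMap_pi_nat [FirstCountableTopology 𝕜]
    [T1Space 𝕜] :
    IsGδ ({0} : Set (WeakBilin B)) ↔ ∃ f : WeakBilin B →L[𝕜] (ℕ → 𝕜), Injective f := by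
  refine ⟨fun h => ?_, fun ⟨f, hf⟩ => f.continuous.isGδ_singleton_of_injective hf 0⟩
  obtain ⟨v, hv⟩ := exists_seq_forall_eq_zero_of_isGδ_zero B h
  let f : WeakBilin B →L[𝕜] (ℕ → 𝕜) :=
    ⟨LinearMap.pi fun n => B.flip (v n), continuous_pi fun n => eval_continuous B (v n)⟩
  exact ⟨f, (injective_iff_map_eq_zero f).mpr fun x hx => hv x (congrFun hx)⟩

end Ring

end WeakBilin

theorem Cardinal.mk_eq_continuum_of_injective_pi_nat {E : Type*} [AddCommGroup E] [Module ℝ E]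
    [Nontrivial E] {f : E → ℕ → ℝ} (hf : Injective f) : #E = 𝔠 := by
  refine le_antisymm ?_ ?_
  · have := lift_mk_le_lift_mk_of_injective hf
    rwa [mk_arrow, mk_real, mk_nat, lift_id, lift_aleph0, continuum_power_aleph0,
      lift_continuum, lift_le_continuum] at this
  · simpa [mk_real] using mk_le_of_module ℝ E

theorem weak_countablePseudocharacter_iff_inj_into_RN_general
    (E : Type) [AddCommGroup E] [Module ℝ E] [TopologicalSpace E]
    (hE : ∃ x : E, x ≠ 0) :
    ((∃ 𝒰 : Set (Set (WeakSpace ℝ E)), 𝒰.Countable ∧ (∀ U ∈ 𝒰, IsOpen U) ∧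
        ⋂₀ 𝒰 = {(0 : WeakSpace ℝ E)}) ↔
      ∃ f : WeakSpace ℝ E →L[ℝ] (ℕ → ℝ), Function.Injective f) ∧
    ((∃ 𝒰 : Set (Set (WeakSpace ℝ E)), 𝒰.Countable ∧ (∀ U ∈ 𝒰, IsOpen U) ∧
        ⋂₀ 𝒰 = {(0 : WeakSpace ℝ E)}) →
      Cardinal.mk E = Cardinal.continuum) := by
  obtain ⟨x, hx⟩ := hE
  have : Nontrivial E := nontrivial_of_ne x 0 hx
  have key : IsGδ ({0} : Set (WeakSpace ℝ E)) ↔ ∃ f : WeakSpace ℝ E →L[ℝ] (ℕ → ℝ), Injective f :=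
    WeakBilin.isGδ_zero_iff_exists_injective_continuousLinearMap_pi_nat _
  rw [← isGδ_iff_exists_countable_sInter_eq, key]
  exact ⟨Iff.rfl, fun ⟨f, hf⟩ => mk_eq_continuum_of_injective_pi_nat (f := f) hf⟩

/-- For a nonzero Hausdorff locally convex space `E`, the weak topology `σ(E,E')` has
countable pseudocharacter iff there is an injective continuous linear map from
`(E, σ(E,E'))` into `ℝ^ℕ`; moreover countable pseudocharacter implies `|E| = 𝔠`. -/
theorem weak_countablePseudocharacter_iff_inj_into_RN
    (E : Type) [AddCommGroup E] [Module ℝ E] [TopologicalSpace E]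
    [IsTopologicalAddGroup E] [ContinuousSMul ℝ E] [LocallyConvexSpace ℝ E] [T2Space E]
    (hE : ∃ x : E, x ≠ 0) :
    ((∃ 𝒰 : Set (Set (WeakSpace ℝ E)), 𝒰.Countable ∧ (∀ U ∈ 𝒰, IsOpen U) ∧
        ⋂₀ 𝒰 = {(0 : WeakSpace ℝ E)}) ↔
      ∃ f : WeakSpace ℝ E →L[ℝ] (ℕ → ℝ), Function.Injective f) ∧
    ((∃ 𝒰 : Set (Set (WeakSpace ℝ E)), 𝒰.Countable ∧ (∀ U ∈ 𝒰, IsOpen U) ∧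
        ⋂₀ 𝒰 = {(0 : WeakSpace ℝ E)}) →
      Cardinal.mk E = Cardinal.continuum) :=
  weak_countablePseudocharacter_iff_inj_into_RN_general E hE
end

section
/- Let E be a nonzero real locally convex Hausdorff topological vector space such that (E, σ(E,E′)) is a σ-space (i.e., (E, σ(E,E′)) has a σ-locally finite network). Then: (i) there exists an injective continuous linear map from (E, σ(E,E′)) into ℝ^ℕ; (ii) (E, σ(E,E′)) has countable pseudocharacter and the cardinality of E equals the continuum 2^{ℵ₀}; (iii) the topological dual E′ endowed with the weak* topology σ(E′,E) is separable. -/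
open TopologicalSpace Filter Set

open scoped Topology

/-
In a T₁ regular space with a σ-locally finite network `⋃ₙ 𝒩ₙ`, a point `x₀` is the
intersection of the open sets `Gₙ = X \ ⋃ {cl A | A ∈ 𝒩ₙ, x₀ ∉ cl A}`, so `σ(E,E')` has countable
pseudocharacter. Each weak neighbourhood of `0` contains the common kernel of finitely many
functionals, hence countably many functionals `φₙ ∈ E'` have only `0` as common zero. Then
`x ↦ (φₙ x)ₙ` is an injective continuous linear map into `ℝ^ℕ`, giving `|E| ≤ 𝔠^ℵ₀ = 𝔠`, and by
Hahn–Banach in `(E', σ(E',E))`, whose dual is `E`, the span of the `φₙ` is weak*-dense.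
-/

lemma IsLocallyFiniteFamily.locallyFinite {X : Type*} [TopologicalSpace X] {N : Set (Set X)}
    (hN : IsLocallyFiniteFamily N) : LocallyFinite fun A : N => (A : Set X) := fun x => by
  obtain ⟨V, hV, hfin⟩ := hN x
  exact ⟨V, hV, (hfin.preimage Subtype.val_injective.injOn).subset fun A hA => ⟨A.2, hA⟩⟩

theorem exists_iInter_isOpen_eq_singleton_of_isSigmaLocallyFinite_network
    {X : Type*} [TopologicalSpace X] [T1Space X] [RegularSpace X] {N : Set (Set X)}
    (hσ : IsSigmaLocallyFinite N) (hN : IsNetwork N) (x₀ : X) :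
    ∃ G : ℕ → Set X, (∀ n, IsOpen (G n)) ∧ ⋂ n, G n = {x₀} := by
  obtain ⟨f, hf, rfl⟩ := hσ
  let C (n : ℕ) (A : {A : f n // x₀ ∉ closure (A : Set X)}) : Set X := closure A.1.1
  have hC (n : ℕ) : LocallyFinite (C n) :=
    (hf n).locallyFinite.closure.comp_injective Subtype.val_injective
  refine ⟨fun n => (⋃ A, C n A)ᶜ,
    fun n => ((hC n).isClosed_iUnion fun _ => isClosed_closure).isOpen_compl,
    eq_singleton_iff_unique_mem.2 ⟨?_, fun x hx => ?_⟩⟩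
  · simp [C]
  by_contra hne
  -- by regularity, `x` lies in a member of the network whose closure misses `x₀`
  obtain ⟨t, ht, htc, hx₀t⟩ :=
    exists_mem_nhds_isClosed_subset (isOpen_compl_singleton.mem_nhds hne)
  obtain ⟨A, hAN, hxA, hAt⟩ :=
    hN x (interior t) isOpen_interior (mem_interior_iff_mem_nhds.2 ht)
  obtain ⟨n, hn⟩ := mem_iUnion.1 hAN
  have hx₀A : x₀ ∉ closure A := fun h =>
    hx₀t (closure_minimal (hAt.trans interior_subset) htc h) rfl
  exact mem_iInter.1 hx n (mem_iUnion.2 ⟨⟨⟨A, hn⟩, hx₀A⟩, subset_closure hxA⟩)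

lemma eq_zero_of_forall_lt_mul {a u : ℝ} (h : ∀ t : ℝ, u < t * a) : a = 0 := by
  by_contra ha
  simpa [div_mul_cancel₀ u ha] using h (u / a)

namespace WeakBilin

section NormedField

variable {𝕜 E F : Type*} [NormedField 𝕜] [AddCommGroup E] [Module 𝕜 E] [AddCommGroup F]
  [Module 𝕜 F] {B : E →ₗ[𝕜] F →ₗ[𝕜] 𝕜}

theorem exists_finset_forall_eq_zero_mem_of_mem_nhds_zero {U : Set (WeakBilin B)}
    (hU : U ∈ 𝓝 0) : ∃ s : Finset F, ∀ x : WeakBilin B, (∀ y ∈ s, B x y = 0) → x ∈ U := by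
  obtain ⟨V, hV, hVU⟩ := B.hasBasis_weakBilin.mem_iff.1 hU
  obtain ⟨s, r, hr, rfl⟩ := (SeminormFamily.basisSets_iff _).1 hV
  refine ⟨s, fun x hx => hVU <| (Seminorm.mem_ball_zero _).2 <|
    Seminorm.finset_sup_apply_lt hr fun y hy => ?_⟩
  show ‖B x y‖ < r
  rwa [hx y hy, norm_zero]

theorem exists_countable_separating_of_iInter_eq_zero {G : ℕ → Set (WeakBilin B)}
    (hG : ∀ n, IsOpen (G n)) (hG0 : ⋂ n, G n = {0}) :
    ∃ D : Set F, D.Countable ∧ ∀ x : WeakBilin B, (∀ y ∈ D, B x y = 0) → x = 0 := by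
  have h0 (n : ℕ) : (0 : WeakBilin B) ∈ G n := mem_iInter.1 (hG0.ge rfl) n
  choose s hs using fun n => exists_finset_forall_eq_zero_mem_of_mem_nhds_zero
    ((hG n).mem_nhds (h0 n))
  refine ⟨⋃ n, s n, countable_iUnion fun n => (s n).countable_toSet, fun x hx => ?_⟩
  have hxG : x ∈ ⋂ n, G n :=
    mem_iInter.2 fun n => hs n x fun y hy => hx y (mem_iUnion.2 ⟨n, hy⟩)
  rwa [hG0] at hxG

theorem exists_injective_continuousLinearMap_nat_pi [Nonempty F] {D : Set F} (hD : D.Countable)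
    (hsep : ∀ x : WeakBilin B, (∀ y ∈ D, B x y = 0) → x = 0) :
    ∃ f : WeakBilin B →L[𝕜] (ℕ → 𝕜), Function.Injective f := by
  obtain ⟨g, hg⟩ := countable_iff_exists_subset_range.1 hD
  refine ⟨ContinuousLinearMap.pi fun n => eval B (g n),
    (injective_iff_map_eq_zero _).2 fun x hx => hsep x ?_⟩
  rintro y hy
  obtain ⟨n, rfl⟩ := hg hy
  exact congrFun hx n

end NormedField

variable {E F : Type*} [AddCommGroup E] [Module ℝ E] [AddCommGroup F] [Module ℝ F]
  {B : E →ₗ[ℝ] F →ₗ[ℝ] ℝ}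

theorem dense_span_of_separating {D : Set (WeakBilin B)}
    (hD : ∀ y : F, (∀ x ∈ D, B x y = 0) → y = 0) :
    Dense (Submodule.span ℝ D : Set (WeakBilin B)) := by
  rw [Submodule.dense_iff_topologicalClosure_eq_top, Submodule.eq_top_iff']
  intro φ
  by_contra hφ
  set S := (Submodule.span ℝ D).topologicalClosure
  obtain ⟨f, u, hfφ, hfS⟩ :=
    geometric_hahn_banach_point_closed S.convex (Submodule.span ℝ D).isClosed_topologicalClosure hφ
  -- the separating functional is `B · y`, and being bounded below on `S` it vanishes on `D`
  obtain ⟨y, rfl⟩ := LinearMap.dualEmbedding_surjective B f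
  have hf (x : WeakBilin B) : eval B y x = B x y := rfl
  have hy : y = 0 := hD y fun x hx => eq_zero_of_forall_lt_mul (u := u) fun t => by
    have := hfS (t • x) <| S.smul_mem t <|
      (Submodule.span ℝ D).le_topologicalClosure (Submodule.subset_span hx)
    rwa [map_smul, smul_eq_mul, hf] at this
  have hu := hfS 0 S.zero_mem
  rw [map_zero] at hu
  rw [hf, hy, map_zero] at hfφ
  linarith

theorem separableSpace_of_countable_separating {D : Set (WeakBilin B)} (hc : D.Countable)
    (hD : ∀ y : F, (∀ x ∈ D, B x y = 0) → y = 0) : SeparableSpace (WeakBilin B) :=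
  isSeparable_univ_iff.1 <|
    (dense_span_of_separating hD).closure_eq ▸ hc.isSeparable.span.closure

end WeakBilin

/-- If a nonzero Hausdorff locally convex space `E` is a σ-space in its weak topology
(i.e. `(E, σ(E,E'))` has a σ-locally finite network), then: (i) there is an injective
continuous linear map from `(E, σ(E,E'))` into `ℝ^ℕ`; (ii) `(E, σ(E,E'))` has countable
pseudocharacter and `|E| = 𝔠`; (iii) the weak* dual `(E', σ(E',E))` is separable. -/
theorem weak_sigmaSpace_necessary_conditions
    (E : Type) [AddCommGroup E] [Module ℝ E] [TopologicalSpace E]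
    [IsTopologicalAddGroup E] [ContinuousSMul ℝ E] [LocallyConvexSpace ℝ E] [T2Space E]
    (hE : ∃ x : E, x ≠ 0)
    (hσ : ∃ N : Set (Set (WeakSpace ℝ E)), IsSigmaLocallyFinite N ∧ IsNetwork N) :
    (∃ f : WeakSpace ℝ E →L[ℝ] (ℕ → ℝ), Function.Injective f) ∧
    (∃ 𝒰 : Set (Set (WeakSpace ℝ E)), 𝒰.Countable ∧ (∀ U ∈ 𝒰, IsOpen U) ∧
        ⋂₀ 𝒰 = {(0 : WeakSpace ℝ E)}) ∧
    Cardinal.mk E = Cardinal.continuum ∧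
    TopologicalSpace.SeparableSpace (WeakDual ℝ E) := by
  obtain ⟨N, hNσ, hN⟩ := hσ
  obtain ⟨G, hGo, hG0⟩ :=
    exists_iInter_isOpen_eq_singleton_of_isSigmaLocallyFinite_network hNσ hN (0 : WeakSpace ℝ E)
  obtain ⟨D, hDc, hDsep⟩ := WeakBilin.exists_countable_separating_of_iInter_eq_zero hGo hG0
  obtain ⟨f, hf⟩ := WeakBilin.exists_injective_continuousLinearMap_nat_pi hDc hDsep
  obtain ⟨x, hx⟩ := hE
  have : Nontrivial E := nontrivial_of_ne x 0 hx
  have hcard : Cardinal.mk E ≤ Cardinal.continuum := calc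
    Cardinal.mk E ≤ Cardinal.mk (ℕ → ℝ) := Cardinal.mk_le_of_injective hf
    _ = Cardinal.continuum := by
      rw [← Cardinal.power_def, Cardinal.mk_real, Cardinal.mk_nat, Cardinal.continuum_power_aleph0]
  refine ⟨⟨f, hf⟩, ⟨range G, countable_range G, forall_mem_range.2 hGo, sInter_range G ▸ hG0⟩,
    hcard.antisymm (continuum_le_cardinal_of_module ℝ E), ?_⟩
  exact WeakBilin.separableSpace_of_countable_separating (B := topDualPairing ℝ E) hDc hDsep
end

section
/- Let 𝒞 denote the Cantor set (as an index set of cardinality continuum). The unit sphere S = {y ∈ ℓ_∞(𝒞) : ‖y‖_∞ = 1} of ℓ_∞(𝒞) is separable in the weak* topology σ(ℓ_∞(𝒞), ℓ₁(𝒞)): there exists a countable set D ⊆ S such that for every y ∈ S, every finitely many x₁,…,x_k ∈ ℓ₁(𝒞) and every ε > 0, there exists w ∈ D with |∑_{t∈𝒞} (w(t) − y(t)) x_i(t)| < ε for all i = 1,…,k. -/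
open TopologicalSpace Filter Set

/-!
On norm-bounded sets the weak* topology of `ℓ_∞(ι) = ℓ₁(ι)*` agrees with the topology of
pointwise convergence (Weierstrass M-test), so it suffices to approximate `y` pointwise on
finite sets by a countable family of norm-one functions. On the Cantor set we take the
rational-valued functions depending on finitely many coordinates: finitely many points are
separated by their prefixes of some length `n`, so any rational values in `[-1, 1]` can be
interpolated, and an extra point where the value `1` is prescribed forces norm one.
-/

open Metric Topology

section PointwiseToWeakStar

variable {ι : Type*}

theorem continuousOn_tsum_sub_mul {x y : ι → ℝ} (hx : Summable fun t => ‖x t‖) {C : ℝ}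
    (hy : ∀ t, ‖y t‖ ≤ C) :
    ContinuousOn (fun u : ι → ℝ => ∑' t, (u t - y t) * x t) {u | ∀ t, ‖u t‖ ≤ C} := by
  refine continuousOn_tsum (u := fun t => 2 * C * ‖x t‖)
    (fun t => (((continuous_apply t).sub continuous_const).mul continuous_const).continuousOn)
    (hx.mul_left _) fun t u hu => ?_
  rw [norm_mul, two_mul]
  gcongr
  exact (norm_sub_le _ _).trans (add_le_add (hu t) (hy t))

theorem exists_forall_abs_tsum_sub_mul_lt_of_mem_closure {D : Set (ι → ℝ)} {C : ℝ}
    (hD : ∀ w ∈ D, ∀ t, ‖w t‖ ≤ C) {y : ι → ℝ} (hy : y ∈ closure D) {k : ℕ}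
    (x : Fin k → ι → ℝ) (hx : ∀ i, Summable fun t => ‖x i t‖) {ε : ℝ} (hε : 0 < ε) :
    ∃ w ∈ D, ∀ i, |∑' t, (w t - y t) * x i t| < ε := by
  set B : Set (ι → ℝ) := {u | ∀ t, ‖u t‖ ≤ C}
  have hDB : D ⊆ B := hD
  have hB : IsClosed B := by
    simp only [B, ofPred_forall]
    exact isClosed_iInter fun t => isClosed_le (continuous_apply t).norm continuous_const
  have hyB : y ∈ B := closure_minimal hDB hB hy
  have hsmall : ∀ᶠ u in 𝓝[B] y, ∀ i, |∑' t, (u t - y t) * x i t| < ε := by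
    refine eventually_all.2 fun i => ?_
    have hcont := (continuousOn_tsum_sub_mul (hx i) hyB).continuousWithinAt hyB
    exact (hcont.eventually (ball_mem_nhds _ hε)).mono fun u hu => by
      simpa only [mem_ball, Real.dist_eq, sub_self, zero_mul, tsum_zero, sub_zero] using hu
  have := mem_closure_iff_nhdsWithin_neBot.1 hy
  exact ((hsmall.filter_mono (nhdsWithin_mono y hDB)).and self_mem_nhdsWithin).exists.imp
    fun w hw => ⟨hw.2, hw.1⟩

end PointwiseToWeakStar

theorem exists_rat_abs_le_one_dist_lt {r δ : ℝ} (hr : |r| ≤ 1) (hδ : 0 < δ) :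
    ∃ q : ℚ, |(q : ℝ)| ≤ 1 ∧ dist (q : ℝ) r < δ := by
  rw [abs_le] at hr
  have hlt : max (-1) (r - δ) < min 1 (r + δ) := by
    simp only [max_lt_iff, lt_min_iff]
    constructor <;> constructor <;> linarith
  obtain ⟨q, hlo, hhi⟩ := exists_rat_btwn hlt
  simp only [max_lt_iff, lt_min_iff] at hlo hhi
  exact ⟨q, abs_le.2 ⟨hlo.1.le, hhi.1.le⟩, by rw [Real.dist_eq, abs_lt]; constructor <;> linarith⟩

local notation "𝒞" => ℕ → Bool

def cantorPrefix (n : ℕ) (t : 𝒞) : Fin n → Bool := fun i => t i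

theorem eventually_injOn_cantorPrefix (S : Set 𝒞) (hS : S.Finite) :
    ∀ᶠ n in atTop, S.InjOn (cantorPrefix n) := by
  have hpair : ∀ s s' : 𝒞, ∀ᶠ n in atTop, cantorPrefix n s = cantorPrefix n s' → s = s' := by
    intro s s'
    by_cases h : s = s'
    · exact Eventually.of_forall fun _ _ => h
    obtain ⟨m, hm⟩ := Function.ne_iff.1 h
    filter_upwards [eventually_gt_atTop m] with n hn heq
    exact absurd (congrFun heq ⟨m, hn⟩) hm
  filter_upwards [hS.eventually_all.2 fun s _ => hS.eventually_all.2 fun s' _ => hpair s s']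
    with n hn s hs s' hs' using hn s hs s' hs'

def ratCylinderFunctions : Set (lp (fun _ : 𝒞 => ℝ) ⊤) :=
  {w | ∃ (n : ℕ) (g : (Fin n → Bool) → ℚ), ∀ t, w t = g (cantorPrefix n t)}

theorem countable_ratCylinderFunctions : ratCylinderFunctions.Countable := by
  refine (countable_iUnion fun p : Σ n, (Fin n → Bool) → ℚ =>
    Subsingleton.countable (s := {w : lp (fun _ : 𝒞 => ℝ) ⊤ |
      ∀ t, w t = p.2 (cantorPrefix p.1 t)}) ?_).mono ?_
  · exact fun w hw w' hw' => lp.ext (funext fun t => (hw t).trans (hw' t).symm)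
  · rintro w ⟨n, g, hw⟩
    exact mem_iUnion.2 ⟨⟨n, g⟩, hw⟩

theorem exists_mem_ratCylinderFunctions_eqOn (S : Set 𝒞) (hS : S.Finite) (q : 𝒞 → ℚ)
    (hq : ∀ s ∈ S, |(q s : ℝ)| ≤ 1) :
    ∃ w ∈ ratCylinderFunctions, ‖w‖ ≤ 1 ∧ ∀ s ∈ S, w s = q s := by
  obtain ⟨n, hn⟩ := (eventually_injOn_cantorPrefix S hS).exists
  set g : (Fin n → Bool) → ℚ := Function.extend (fun s : S => cantorPrefix n s) (fun s => q s) 0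
  have hg_eq : ∀ s ∈ S, g (cantorPrefix n s) = q s := fun s hs =>
    hn.injective.extend_apply (fun s : S => q s) 0 ⟨s, hs⟩
  have hg_le : ∀ v, |(g v : ℝ)| ≤ 1 := by
    intro v
    by_cases h : ∃ s : S, cantorPrefix n s = v
    · obtain ⟨⟨s, hs⟩, rfl⟩ := h
      rw [hg_eq s hs]
      exact hq s hs
    · simp [g, Function.extend_apply' _ _ _ h]
  let w : lp (fun _ : 𝒞 => ℝ) ⊤ :=
    ⟨fun t => g (cantorPrefix n t), memℓp_infty ⟨1, by rintro _ ⟨t, rfl⟩; exact hg_le _⟩⟩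
  exact ⟨w, ⟨n, g, fun t => rfl⟩, lp.norm_le_of_forall_le zero_le_one fun t => hg_le _,
    fun s hs => congrArg ((↑) : ℚ → ℝ) (hg_eq s hs)⟩

theorem coe_mem_closure_ratCylinderFunctions_inter_sphere (y : lp (fun _ : 𝒞 => ℝ) ⊤)
    (hy : ‖y‖ ≤ 1) :
    ⇑y ∈ closure ((⇑) '' (ratCylinderFunctions ∩ sphere 0 1)) := by
  classical
  have hbasis : (𝓝 (⇑y : 𝒞 → ℝ)).HasBasis
      (fun Iδ : Set 𝒞 × (𝒞 → ℝ) => Iδ.1.Finite ∧ ∀ t ∈ Iδ.1, 0 < Iδ.2 t)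
      fun Iδ => Iδ.1.pi fun t => ball (y t) (Iδ.2 t) := by
    rw [nhds_pi]
    exact hasBasis_pi fun t => nhds_basis_ball
  rw [mem_closure_iff_nhds_basis hbasis]
  rintro ⟨I, δ⟩ ⟨hI, hδ⟩
  have hyt : ∀ t, |y t| ≤ 1 := fun t =>
    (lp.norm_apply_le_norm ENNReal.top_ne_zero y t).trans hy
  have happrox : ∀ t, ∃ q : ℚ, |(q : ℝ)| ≤ 1 ∧ (t ∈ I → dist (q : ℝ) (y t) < δ t) := by
    intro t
    by_cases ht : t ∈ I
    · obtain ⟨q, hq1, hqy⟩ := exists_rat_abs_le_one_dist_lt (hyt t) (hδ t ht)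
      exact ⟨q, hq1, fun _ => hqy⟩
    · exact ⟨0, by simp, fun h => absurd h ht⟩
  choose q hq1 hqy using happrox
  obtain ⟨t₀, ht₀⟩ := hI.infinite_compl.nonempty
  obtain ⟨w, hw, hw1, hwq⟩ := exists_mem_ratCylinderFunctions_eqOn (insert t₀ I) (hI.insert t₀)
    (Function.update q t₀ 1) fun s _ => by
      rcases eq_or_ne s t₀ with rfl | hs
      · simp
      · simpa [hs] using hq1 s
  have hwt₀ : w t₀ = 1 := by simpa using hwq t₀ (mem_insert _ _)
  have hnorm : ‖w‖ = 1 := le_antisymm hw1 <| by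
    simpa [hwt₀] using lp.norm_apply_le_norm ENNReal.top_ne_zero w t₀
  refine ⟨w, ⟨w, ⟨hw, mem_sphere_zero_iff_norm.2 hnorm⟩, rfl⟩, fun t ht => ?_⟩
  have hne : t ≠ t₀ := fun h => ht₀ (h ▸ ht)
  simpa [hwq t (mem_insert_of_mem _ ht), hne] using hqy t ht

/-- The unit sphere of `ℓ_∞(𝒞)`, where `𝒞` is the Cantor set, is separable in the
weak* topology `σ(ℓ_∞(𝒞), ℓ₁(𝒞))`. -/
theorem sphere_ellInfty_cantor_weakStar_separable :
    ∃ D : Set (lp (fun _ : ℕ → Bool => ℝ) ⊤), D.Countable ∧ (∀ w ∈ D, ‖w‖ = 1) ∧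
      ∀ y : lp (fun _ : ℕ → Bool => ℝ) ⊤, ‖y‖ = 1 →
        ∀ (k : ℕ) (x : Fin k → lp (fun _ : ℕ → Bool => ℝ) 1) (ε : ℝ), 0 < ε →
          ∃ w ∈ D, ∀ i : Fin k, |∑' t : ℕ → Bool, (w t - y t) * x i t| < ε := by
  refine ⟨ratCylinderFunctions ∩ sphere 0 1, countable_ratCylinderFunctions.mono inter_subset_left,
    fun w hw => mem_sphere_zero_iff_norm.1 hw.2, fun y hy k x ε hε => ?_⟩
  have hbound : ∀ w ∈ (⇑) '' (ratCylinderFunctions ∩ sphere 0 1), ∀ t, ‖w t‖ ≤ 1 := by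
    rintro _ ⟨w, ⟨-, hw⟩, rfl⟩ t
    simpa [mem_sphere_zero_iff_norm.1 hw] using lp.norm_apply_le_norm ENNReal.top_ne_zero w t
  have hx : ∀ i, Summable fun t => ‖x i t‖ := fun i => by
    simpa using (lp.memℓp (x i)).summable (by norm_num)
  obtain ⟨_, ⟨w, hw, rfl⟩, hwy⟩ := exists_forall_abs_tsum_sub_mul_lt_of_mem_closure hbound
    (coe_mem_closure_ratCylinderFunctions_inter_sphere y hy.le) (fun i => ⇑(x i)) hx hε
  exact ⟨w, hw, hwy⟩
end

section
/- Let E be a real Banach space such that the unit sphere of the dual space E′ is separable in the weak* topology σ(E′,E). Then for every r > 0 there exists a countable family 𝓕 of weakly closed (σ(E,E′)-closed) subsets of E, each contained in {x ∈ E : ‖x‖ > r}, such that {x ∈ E : ‖x‖ > r} = ⋃_{F ∈ 𝓕} Int_w(F), where Int_w denotes the interior with respect to the weak topology σ(E,E′). -/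
open TopologicalSpace Filter Set

/-!
The family consists of the weakly closed half-spaces `{x | q ≤ φ x}` with `φ ∈ D` and rational
`q > r`; they lie in `{‖x‖ > r}` because `φ x ≤ ‖x‖`. If `r < q < ‖x‖`, a norming functional of
`x` lies in the weak*-open set `{φ | q < φ x}`, which therefore meets `D`, and `x` is in the weak
interior of the corresponding half-space.
-/

theorem WeakSpace.continuous_weakDual_apply {𝕜 E : Type*} [NormedField 𝕜]
    [SeminormedAddCommGroup E] [NormedSpace 𝕜 E] (φ : WeakDual 𝕜 E) :
    Continuous fun x : WeakSpace 𝕜 E => φ x :=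
  WeakBilin.eval_continuous (topDualPairing 𝕜 E).flip φ

variable {E : Type*} [SeminormedAddCommGroup E] [NormedSpace ℝ E]

namespace WeakSpace

theorem isClosed_setOf_le_weakDual_apply (φ : WeakDual ℝ E) (q : ℝ) :
    IsClosed {x : WeakSpace ℝ E | q ≤ φ x} :=
  isClosed_le continuous_const (continuous_weakDual_apply φ)

theorem setOf_lt_weakDual_apply_subset_interior (φ : WeakDual ℝ E) (q : ℝ) :
    {x : WeakSpace ℝ E | q < φ x} ⊆ interior {x : WeakSpace ℝ E | q ≤ φ x} :=
  interior_maximal (ofPred_subset_ofPred.mpr fun _ => le_of_lt)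
    (isOpen_lt continuous_const (continuous_weakDual_apply φ))

end WeakSpace

namespace WeakDual

theorem apply_le_norm {φ : WeakDual ℝ E} (hφ : ‖toStrongDual φ‖ ≤ 1) (x : E) : φ x ≤ ‖x‖ := by
  simpa using (le_abs_self _).trans ((toStrongDual φ).le_of_opNorm_le hφ x)

theorem exists_mem_lt_apply_of_sphere_subset_closure {D : Set (WeakDual ℝ E)}
    (hD : {φ : WeakDual ℝ E | ‖toStrongDual φ‖ = 1} ⊆ closure D) {x : E} {q : ℝ} (hq : 0 ≤ q)
    (hx : q < ‖x‖) : ∃ φ ∈ D, q < φ x := by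
  obtain ⟨g, hg_norm, hgx⟩ := exists_dual_vector ℝ x ((hq.trans_lt hx).ne')
  have hg_mem : StrongDual.toWeakDual g ∈ {φ : WeakDual ℝ E | q < φ x} := by
    simpa [hgx] using hx
  obtain ⟨φ, hφ, hφD⟩ := mem_closure_iff.mp (hD hg_norm) _
    (isOpen_lt continuous_const (eval_continuous x)) hg_mem
  exact ⟨φ, hφD, hφ⟩

end WeakDual

theorem countable_weaklyClosed_cover_of_weakStar_separable_dual_sphere_general
    (E : Type) [NormedAddCommGroup E] [NormedSpace ℝ E]
    (D : Set (WeakDual ℝ E)) (hDc : D.Countable)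
    (hDs : ∀ φ ∈ D, ‖WeakDual.toStrongDual φ‖ = 1)
    (hDd : {φ : WeakDual ℝ E | ‖WeakDual.toStrongDual φ‖ = 1} ⊆ closure D) :
    ∀ r : ℝ, 0 < r →
      ∃ 𝓕 : Set (Set (WeakSpace ℝ E)), 𝓕.Countable ∧
        (∀ F ∈ 𝓕, IsClosed F ∧ F ⊆ {x : WeakSpace ℝ E | r < @Norm.norm E _ x}) ∧
        {x : WeakSpace ℝ E | r < @Norm.norm E _ x} = ⋃ F ∈ 𝓕, interior F := by
  intro r hr
  have lt_norm {φ : WeakDual ℝ E} (hφ : φ ∈ D) {q : ℝ} (hq : r < q) {x : WeakSpace ℝ E}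
      (hx : q ≤ φ x) : r < @Norm.norm E _ x :=
    hq.trans_le (hx.trans (WeakDual.apply_le_norm (hDs φ hφ).le x))
  refine ⟨(fun p : WeakDual ℝ E × ℚ => {x : WeakSpace ℝ E | (p.2 : ℝ) ≤ p.1 x}) ''
      (D ×ˢ {q : ℚ | r < q}), (hDc.prod (to_countable _)).image _, ?_, ?_⟩
  · rintro _ ⟨⟨φ, q⟩, ⟨hφ, hq⟩, rfl⟩
    exact ⟨WeakSpace.isClosed_setOf_le_weakDual_apply φ q, fun x hx => lt_norm hφ hq hx⟩
  · ext x
    simp only [mem_iUnion, mem_image, Prod.exists]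
    constructor
    · intro hx
      obtain ⟨q, hrq, hqx⟩ := exists_rat_btwn (show r < @Norm.norm E _ x from hx)
      obtain ⟨φ, hφ, hqφ⟩ := WeakDual.exists_mem_lt_apply_of_sphere_subset_closure hDd
        (hr.trans hrq).le hqx
      exact ⟨_, ⟨φ, q, ⟨hφ, hrq⟩, rfl⟩,
        WeakSpace.setOf_lt_weakDual_apply_subset_interior φ q hqφ⟩
    · rintro ⟨_, ⟨φ, q, ⟨hφ, hq⟩, rfl⟩, hx⟩
      have hqx := interior_subset hx
      exact lt_norm hφ hq hqx

/-- If the unit sphere of the dual of a Banach space `E` is weak*-separable, then for each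
`r > 0` the set `{x : ‖x‖ > r}` is the union of the weak interiors of a countable family of
weakly closed sets contained in it. -/
theorem countable_weaklyClosed_cover_of_weakStar_separable_dual_sphere
    (E : Type) [NormedAddCommGroup E] [NormedSpace ℝ E] [CompleteSpace E]
    (D : Set (WeakDual ℝ E)) (hDc : D.Countable)
    (hDs : ∀ φ ∈ D, ‖WeakDual.toStrongDual φ‖ = 1)
    (hDd : {φ : WeakDual ℝ E | ‖WeakDual.toStrongDual φ‖ = 1} ⊆ closure D) :
    ∀ r : ℝ, 0 < r →
      ∃ 𝓕 : Set (Set (WeakSpace ℝ E)), 𝓕.Countable ∧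
        (∀ F ∈ 𝓕, IsClosed F ∧ F ⊆ {x : WeakSpace ℝ E | r < @Norm.norm E _ x}) ∧
        {x : WeakSpace ℝ E | r < @Norm.norm E _ x} = ⋃ F ∈ 𝓕, interior F :=
  countable_weaklyClosed_cover_of_weakStar_separable_dual_sphere_general E D hDc hDs hDd
end

section
/- Let Γ be a set (in the paper, Γ is the Cantor set), let 0 < ε < r, and set M(r,ε) = {x ∈ ℓ₁(Γ) : r − ε < ‖x‖ ≤ r}. Then for every x ∈ M(r,ε) there exists a set V ⊆ ℓ₁(Γ) that is open in the topology of pointwise convergence (in particular, weakly open) such that x ∈ V and ‖y₁ − y₂‖ ≤ 4ε for all y₁, y₂ ∈ V ∩ M(r,ε) (i.e., the norm diameter of V ∩ M(r,ε) is at most 4ε). -/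
open TopologicalSpace Filter Set

/-! In `ℓ¹`, let `s` be a finite set carrying all but `ε / 4` of the mass of `x`. If `y` is within
`ε / 4` of `x` on `s` (a pointwise-open condition), then `‖y - x‖ ≤ ‖y‖ - ‖x‖ + ε`: off `s`, `y - x`
is bounded by the tails of `y` and `x`, and the tail of `y` exceeds `‖y‖ - ‖x‖` by at most the tail
of `x` plus the discrepancy on `s`. On the annulus `‖y‖ - ‖x‖ < ε`, so such `y` lie within `2ε`
of `x`. -/

namespace lp

variable {ι : Type*} {E : ι → Type*} [∀ i, NormedAddCommGroup (E i)]

theorem hasSum_norm_one (f : lp E 1) : HasSum (fun i => ‖f i‖) ‖f‖ := by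
  simpa using hasSum_norm (p := 1) (by norm_num) f

theorem tsum_compl_norm_eq (f : lp E 1) (s : Finset ι) :
    ∑' i : {i // i ∉ s}, ‖f i‖ = ‖f‖ - ∑ i ∈ s, ‖f i‖ := by
  rw [eq_sub_iff_add_eq', (hasSum_norm_one f).summable.sum_add_tsum_subtype_compl s,
    (hasSum_norm_one f).tsum_eq]

theorem norm_sub_le_of_finset (x y : lp E 1) (s : Finset ι) :
    ‖y - x‖ ≤ 2 * ∑ i ∈ s, ‖y i - x i‖ + (‖y‖ - ‖x‖) + 2 * (‖x‖ - ∑ i ∈ s, ‖x i‖) := by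
  have tail_le : ∑' i : {i // i ∉ s}, ‖y i - x i‖ ≤
      ∑' i : {i // i ∉ s}, ‖y i‖ + ∑' i : {i // i ∉ s}, ‖x i‖ := by
    have hy : Summable fun i : {i // i ∉ s} => ‖y i‖ := (hasSum_norm_one y).summable.subtype _
    have hx : Summable fun i : {i // i ∉ s} => ‖x i‖ := (hasSum_norm_one x).summable.subtype _
    rw [← hy.tsum_add hx]
    exact ((hasSum_norm_one (y - x)).summable.subtype _).tsum_le_tsum
      (fun i => norm_sub_le _ _) (hy.add hx)
  have head_le : ∑ i ∈ s, ‖x i‖ ≤ ∑ i ∈ s, ‖y i‖ + ∑ i ∈ s, ‖y i - x i‖ := by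
    rw [← Finset.sum_add_distrib]
    exact Finset.sum_le_sum fun i _ => norm_le_norm_add_norm_sub (y i) (x i)
  have tail_sub := tsum_compl_norm_eq (y - x) s
  rw [tsum_compl_norm_eq, tsum_compl_norm_eq] at tail_le
  simp only [coeFn_sub, Pi.sub_apply] at tail_sub
  linarith

theorem exists_isOpen_norm_sub_le (x : lp E 1) {ε : ℝ} (hε : 0 < ε) :
    ∃ W : Set (∀ i, E i), IsOpen W ∧ ⇑x ∈ W ∧
      ∀ y : lp E 1, ⇑y ∈ W → ‖y - x‖ ≤ ‖y‖ - ‖x‖ + ε := by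
  obtain ⟨s, hs⟩ : ∃ s : Finset ι, ‖x‖ - ε / 4 < ∑ i ∈ s, ‖x i‖ :=
    ((hasSum_norm_one x).eventually (eventually_gt_nhds (by linarith))).exists
  refine ⟨{g | ∑ i ∈ s, ‖g i - x i‖ < ε / 4}, ?_, by simpa using hε, fun y hy => ?_⟩
  · exact isOpen_lt (continuous_finsetSum _ fun i _ =>
      ((continuous_apply i).sub continuous_const).norm) continuous_const
  · linarith [norm_sub_le_of_finset x y s, hy.out]

end lp

theorem ellOne_annulus_small_pointwise_nbhd_general (Γ : Type) (r ε : ℝ) (hε : 0 < ε)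
    (x : lp (fun _ : Γ => ℝ) 1) (hx₁ : r - ε < ‖x‖) :
    ∃ V : Set (lp (fun _ : Γ => ℝ) 1),
      (∃ W : Set (Γ → ℝ), IsOpen W ∧ V = (fun z : lp (fun _ : Γ => ℝ) 1 => ⇑z) ⁻¹' W) ∧
      x ∈ V ∧
      ∀ y₁ ∈ V, ∀ y₂ ∈ V, r - ε < ‖y₁‖ → ‖y₁‖ ≤ r → r - ε < ‖y₂‖ → ‖y₂‖ ≤ r →
        ‖y₁ - y₂‖ ≤ 4 * ε := by
  obtain ⟨W, hW, hxW, hclose⟩ := lp.exists_isOpen_norm_sub_le x hε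
  refine ⟨_, ⟨W, hW, rfl⟩, hxW, fun y₁ hy₁ y₂ hy₂ _ hy₁r _ hy₂r => ?_⟩
  linarith [norm_sub_le_norm_sub_add_norm_sub y₁ x y₂, norm_sub_rev x y₂,
    hclose y₁ hy₁, hclose y₂ hy₂]

/-- In `ℓ₁(Γ)`, for `0 < ε < r` and `M(r,ε) = {x : r - ε < ‖x‖ ≤ r}`, every `x ∈ M(r,ε)`
has a pointwise-open (hence weakly open) neighbourhood `V` with
`diam (V ∩ M(r,ε)) ≤ 4ε` in norm. -/
theorem ellOne_annulus_small_pointwise_nbhd (Γ : Type) (r ε : ℝ) (hε : 0 < ε) (hεr : ε < r)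
    (x : lp (fun _ : Γ => ℝ) 1) (hx₁ : r - ε < ‖x‖) (hx₂ : ‖x‖ ≤ r) :
    ∃ V : Set (lp (fun _ : Γ => ℝ) 1),
      (∃ W : Set (Γ → ℝ), IsOpen W ∧ V = (fun z : lp (fun _ : Γ => ℝ) 1 => ⇑z) ⁻¹' W) ∧
      x ∈ V ∧
      ∀ y₁ ∈ V, ∀ y₂ ∈ V, r - ε < ‖y₁‖ → ‖y₁‖ ≤ r → r - ε < ‖y₂‖ → ‖y₂‖ ≤ r →
        ‖y₁ - y₂‖ ≤ 4 * ε :=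
  ellOne_annulus_small_pointwise_nbhd_general Γ r ε hε x hx₁
end

section
/- Let X be a regular Hausdorff topological space. Then (i) X is a cosmic space (has a countable network) if and only if X is a Lindelöf σ-space (is Lindelöf and has a σ-locally finite network); and (ii) X is an ℵ₀-space (has a countable k-network) if and only if X is a Lindelöf ℵ-space (is Lindelöf and has a σ-locally finite k-network). -/
open TopologicalSpace Filter Set

/-- A k-network is a network. -/
lemma IsKNetwork.isNetwork {X : Type*} [TopologicalSpace X] {N : Set (Set X)}
    (h : IsKNetwork N) : IsNetwork N := by
  intro x U hU hx
  obtain ⟨F, hFN, -, hKF, hFU⟩ :=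
    h {x} U isCompact_singleton hU (singleton_subset_iff.2 hx)
  obtain ⟨A, hAF, hxA⟩ := hKF rfl
  exact ⟨A, hFN hAF, hxA, fun y hy => hFU ⟨A, hAF, hy⟩⟩

/-- A countable family is σ-locally finite. -/
lemma Set.Countable.isSigmaLocallyFinite {X : Type*} [TopologicalSpace X] {N : Set (Set X)}
    (h : N.Countable) : IsSigmaLocallyFinite N := by
  rcases N.eq_empty_or_nonempty with rfl | hne
  · exact ⟨fun _ => ∅, fun n x => ⟨univ, univ_mem, by simp⟩, by simp⟩
  · obtain ⟨f, rfl⟩ := h.exists_eq_range hne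
    refine ⟨fun n => {f n}, fun n x => ⟨univ, univ_mem, (finite_singleton (f n)).subset
      (sep_subset _ _)⟩, (iUnion_singleton_eq_range f).symm⟩

/-- A countable network implies Lindelöf. -/
lemma lindelof_of_countable_network {X : Type*} [TopologicalSpace X] {N : Set (Set X)}
    (hc : N.Countable) (hn : IsNetwork N) : LindelofSpace X := by
  constructor
  apply isLindelof_of_countable_subcover
  intro ι U hUo hsU
  classical
  have key : ∀ A : Set X, A ∈ {A ∈ N | ∃ i, A ⊆ U i} → ∃ i, A ⊆ U i := fun A hA => hA.2
  choose g hg using key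
  have hcs : Countable {A ∈ N | ∃ i, A ⊆ U i} :=
    countable_coe_iff.2 (hc.mono (sep_subset _ _))
  refine ⟨range fun A : {A ∈ N | ∃ i, A ⊆ U i} => g A A.2, countable_range _, ?_⟩
  intro x hx
  obtain ⟨i, hi⟩ := mem_iUnion.1 (hsU hx)
  obtain ⟨A, hAN, hxA, hAU⟩ := hn x (U i) (hUo i) hi
  have hA : A ∈ {A ∈ N | ∃ i, A ⊆ U i} := ⟨hAN, i, hAU⟩
  exact mem_iUnion₂.2 ⟨g A hA, ⟨⟨A, hA⟩, rfl⟩, hg A hA hxA⟩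

/-- In a Lindelöf space, a locally finite family is countable. -/
lemma IsLocallyFiniteFamily.countable {X : Type*} [TopologicalSpace X] [LindelofSpace X]
    {N : Set (Set X)} (h : IsLocallyFiniteFamily N) : N.Countable := by
  choose V hV hVfin using h
  obtain ⟨t, htc, htu⟩ := isLindelof_univ.elim_countable_subcover
    (fun x => interior (V x)) (fun _ => isOpen_interior)
    (fun x _ => mem_iUnion.2 ⟨x, mem_interior_iff_mem_nhds.2 (hV x)⟩)
  have : N ⊆ (⋃ x ∈ t, {A ∈ N | (A ∩ V x).Nonempty}) ∪ {∅} := by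
    intro A hA
    rcases A.eq_empty_or_nonempty with rfl | ⟨a, ha⟩
    · exact Or.inr rfl
    · obtain ⟨x, hx, hax⟩ := mem_iUnion₂.1 (htu (mem_univ a))
      exact Or.inl (mem_iUnion₂.2 ⟨x, hx, hA, a, ha, interior_subset hax⟩)
  exact ((Countable.biUnion htc fun x _ => (hVfin x).countable).union
    (countable_singleton _)).mono this

/-- A σ-locally finite family in a Lindelöf space is countable. -/
lemma IsSigmaLocallyFinite.countable {X : Type*} [TopologicalSpace X] [LindelofSpace X]
    {N : Set (Set X)} (h : IsSigmaLocallyFinite N) : N.Countable := by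
  obtain ⟨f, hf, rfl⟩ := h
  exact countable_iUnion fun n => (hf n).countable

/-- For a regular Hausdorff space `X`: (i) `X` is cosmic (has a countable network) iff `X`
is a Lindelöf σ-space (Lindelöf with a σ-locally finite network); (ii) `X` is an ℵ₀-space
(has a countable k-network) iff `X` is a Lindelöf ℵ-space (Lindelöf with a σ-locally finite
k-network). -/
theorem cosmic_iff_lindelof_sigma_and_aleph0_iff_lindelof_aleph
    (X : Type*) [TopologicalSpace X] [RegularSpace X] [T2Space X] :
    ((∃ N : Set (Set X), N.Countable ∧ IsNetwork N) ↔
      (LindelofSpace X ∧ ∃ N : Set (Set X), IsSigmaLocallyFinite N ∧ IsNetwork N)) ∧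
    ((∃ N : Set (Set X), N.Countable ∧ IsKNetwork N) ↔
      (LindelofSpace X ∧ ∃ N : Set (Set X), IsSigmaLocallyFinite N ∧ IsKNetwork N)) := by
  constructor
  · constructor
    · rintro ⟨N, hc, hn⟩
      exact ⟨lindelof_of_countable_network hc hn, N, hc.isSigmaLocallyFinite, hn⟩
    · rintro ⟨hL, N, hs, hn⟩
      exact ⟨N, hs.countable, hn⟩
  · constructor
    · rintro ⟨N, hc, hn⟩
      exact ⟨lindelof_of_countable_network hc hn.isNetwork, N, hc.isSigmaLocallyFinite, hn⟩
    · rintro ⟨hL, N, hs, hn⟩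
      exact ⟨N, hs.countable, hn⟩
end

section
/- Let X be a completely regular Hausdorff space containing a compact subset K that is not scattered. Then C_c(X) endowed with its weak topology σ(E,E′) is not an ℵ-space. -/
/-
A non-scattered compact set `K` contains a nonempty set `T` without isolated points. Complete
regularity then yields a binary tree of bumps `f_w ∈ C(X, ℝ)`, indexed by finite words `w`, each
peaking at a point of `T`, such that the two children of `f_w` vanish where `f_w ≤ 1/2` and have
disjoint supports. Along a branch `u`, the bumps at the nodes leaving `u` have pairwise disjoint
supports, so they form a weakly null sequence (a functional on `C_c(X)` is bounded on the
sup-norm unit ball); and by compactness of `K` some point `x_u` sees the values `≥ 1/2` on the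
nodes of `u` and `0` on the nodes leaving `u`.

A σ-locally finite family has only countably many members with `0` in their closure. A diagonal
argument chooses the branch `u` so that each of these members either contains a node of `u`,
hence is not inside `{h | |h x_u| < 1/2}`, or eventually misses the nodes leaving `u`. But the
k-network property, applied to the compact set formed by `0` and the nodes leaving `u` inside
`{h | |h x_u| < 1/2}`, yields a member inside that set containing infinitely many of these
nodes, hence with `0` in its closure.
-/

open TopologicalSpace Filter Set

/-- A set `S` is *scattered* if every nonempty subset `T ⊆ S` has a point isolated in the
subspace topology of `T`. -/
def IsScattered {X : Type*} [TopologicalSpace X] (S : Set X) : Prop :=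
  ∀ T ⊆ S, T.Nonempty → ∃ x ∈ T, ∃ U : Set X, IsOpen U ∧ U ∩ T = {x}

open Topology BoundedContinuousFunction

/-- `branchPrefix u m` is `[u (m-1), …, u 0]`: the first `m` values of `u`, latest first. -/
def branchPrefix (u : ℕ → Bool) : ℕ → List Bool
  | 0 => []
  | m + 1 => u m :: branchPrefix u m

def offBranch (u : ℕ → Bool) (j : ℕ) : List Bool := (!u j) :: branchPrefix u j

@[simp] lemma length_branchPrefix (u : ℕ → Bool) (m : ℕ) : (branchPrefix u m).length = m := by
  induction m with
  | zero => rfl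
  | succ m ih => simp [branchPrefix, ih]

lemma branchPrefix_suffix (u : ℕ → Bool) {m n : ℕ} (h : m ≤ n) :
    branchPrefix u m <:+ branchPrefix u n := by
  induction n, h using Nat.le_induction with
  | base => exact List.suffix_refl _
  | succ n _ ih => exact ih.trans (List.suffix_cons _ _)

lemma branchPrefix_congr {u v : ℕ → Bool} {m : ℕ} (h : ∀ k < m, u k = v k) :
    branchPrefix u m = branchPrefix v m := by
  induction m with
  | zero => rfl
  | succ m ih =>
    simp only [branchPrefix, h m m.lt_succ_self, ih fun k hk => h k (hk.trans m.lt_succ_self)]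

def cylinder (w : List Bool) : Set (ℕ → Bool) := {u | branchPrefix u w.length = w}

lemma cylinder_cons (b : Bool) (w : List Bool) :
    cylinder (b :: w) = {u | u w.length = b} ∩ cylinder w := by
  ext u
  simp [cylinder, branchPrefix]

lemma isClosed_cylinder (w : List Bool) : IsClosed (cylinder w) := by
  induction w with
  | nil => simp [cylinder, branchPrefix]
  | cons b w ih =>
    rw [cylinder_cons]
    exact (isClosed_eq (continuous_apply _) continuous_const).inter ih

lemma cylinder_nonempty (w : List Bool) : (cylinder w).Nonempty := by
  induction w with
  | nil => exact ⟨fun _ => false, rfl⟩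
  | cons b w ih =>
    obtain ⟨u, hu⟩ := ih
    refine ⟨Function.update u w.length b, ?_⟩
    rw [cylinder_cons]
    refine ⟨by simp, ?_⟩
    exact (branchPrefix_congr fun k hk => Function.update_of_ne hk.ne _ _).trans hu

lemma cylinder_subset_of_suffix {s w : List Bool} (h : s <:+ w) : cylinder w ⊆ cylinder s := by
  intro u hu
  have hsuf : branchPrefix u s.length <:+ w :=
    hu ▸ branchPrefix_suffix u h.length_le
  exact (List.suffix_of_suffix_length_le hsuf h (by simp)).eq_of_length (by simp)

lemma suffix_offBranch_of_mem_cylinder {s : List Bool} {u : ℕ → Bool} (hu : u ∈ cylinder s)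
    {j : ℕ} (hj : s.length ≤ j) : s <:+ offBranch u j :=
  (hu ▸ branchPrefix_suffix u hj).trans (List.suffix_cons _ _)

open Classical in
noncomputable def meetingChain (E : ℕ → Set (List Bool)) : ℕ → List Bool
  | 0 => []
  | i + 1 => if h : ∃ w ∈ E i, meetingChain E i <:+ w then h.choose else meetingChain E i

lemma meetingChain_suffix_succ (E : ℕ → Set (List Bool)) (i : ℕ) :
    meetingChain E i <:+ meetingChain E (i + 1) := by
  rw [meetingChain]
  split_ifs with h
  · exact h.choose_spec.2
  · exact List.suffix_refl _

theorem exists_branch_meets_or_eventually_avoids (E : ℕ → Set (List Bool)) :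
    ∃ u : ℕ → Bool, ∀ i, (∃ m, branchPrefix u m ∈ E i) ∨ ∀ᶠ j in atTop, offBranch u j ∉ E i := by
  set s := meetingChain E
  obtain ⟨u, hu⟩ := IsCompact.nonempty_iInter_of_sequence_nonempty_isCompact_isClosed
    (fun i => cylinder (s i)) (fun i => cylinder_subset_of_suffix (meetingChain_suffix_succ E i))
    (fun i => cylinder_nonempty _) (isClosed_cylinder _).isCompact (fun i => isClosed_cylinder _)
  rw [mem_iInter] at hu
  refine ⟨u, fun i => ?_⟩
  by_cases h : ∃ w ∈ E i, s i <:+ w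
  · have hmem : u ∈ cylinder h.choose := by
      simpa only [s, meetingChain, dif_pos h] using hu (i + 1)
    exact Or.inl ⟨_, hmem.symm ▸ h.choose_spec.1⟩
  · refine Or.inr (eventually_atTop.2 ⟨(s i).length, fun j hj hjE => h ?_⟩)
    exact ⟨_, hjE, suffix_offBranch_of_mem_cylinder (hu i) hj⟩

section Network

variable {Y : Type*} [TopologicalSpace Y]

lemma IsSigmaLocallyFinite.countable_setOf_mem_closure {N : Set (Set Y)}
    (hN : IsSigmaLocallyFinite N) (y : Y) : {A ∈ N | y ∈ closure A}.Countable := by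
  obtain ⟨f, hf, rfl⟩ := hN
  choose V hV hfin using fun n => hf n y
  refine (countable_iUnion fun n => (hfin n).countable).mono ?_
  rintro A ⟨hA, hyA⟩
  obtain ⟨n, hn⟩ := mem_iUnion.1 hA
  exact mem_iUnion.2 ⟨n, hn, inter_comm A (V n) ▸ mem_closure_iff_nhds.1 hyA _ (hV n)⟩

lemma IsKNetwork.exists_frequently_mem_s14 {N : Set (Set Y)} (hN : IsKNetwork N) {a : ℕ → Y}
    {y : Y} (ha : Tendsto a atTop (𝓝 y)) {U : Set Y} (hU : IsOpen U) (hyU : y ∈ U)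
    (haU : ∀ j, a j ∈ U) : ∃ A ∈ N, A ⊆ U ∧ ∃ᶠ j in atTop, a j ∈ A := by
  obtain ⟨F, hFN, hF, hcover, hFU⟩ :=
    hN _ U ha.isCompact_insert_range hU (insert_subset hyU (range_subset_iff.2 haU))
  by_contra! hnot
  have hall : ∀ᶠ j in atTop, ∀ A ∈ F, a j ∉ A := by
    refine (eventually_all_finite hF).2 fun A hA => ?_
    simpa using hnot A (hFN hA) ((subset_sUnion_of_mem hA).trans hFU)
  obtain ⟨j, hj⟩ := hall.exists
  obtain ⟨A, hA, hjA⟩ := hcover (mem_insert_of_mem _ (mem_range_self j))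
  exact hj A hA hjA

theorem not_exists_sigmaLocallyFinite_kNetwork_of_tree (g : List Bool → Y) (y : Y)
    (hnull : ∀ u, Tendsto (fun j => g (offBranch u j)) atTop (𝓝 y))
    (hsep : ∀ u, ∃ U, IsOpen U ∧ y ∈ U ∧ (∀ j, g (offBranch u j) ∈ U) ∧
      ∀ m, g (branchPrefix u m) ∉ U) :
    ¬ ∃ N : Set (Set Y), IsSigmaLocallyFinite N ∧ IsKNetwork N := by
  rintro ⟨N, hσ, hk⟩
  have : Nonempty Y := ⟨y⟩
  obtain ⟨e, he⟩ := countable_iff_exists_subset_range.1 (hσ.countable_setOf_mem_closure y)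
  obtain ⟨u, hu⟩ := exists_branch_meets_or_eventually_avoids fun i => g ⁻¹' e i
  obtain ⟨U, hU, hyU, hoffU, hprefU⟩ := hsep u
  obtain ⟨A, hAN, hAU, hfreq⟩ := hk.exists_frequently_mem_s14 (hnull u) hU hyU hoffU
  obtain ⟨i, rfl⟩ := he ⟨hAN, mem_closure_of_frequently_of_tendsto hfreq (hnull u)⟩
  rcases hu i with ⟨m, hm⟩ | hev
  · exact hprefU m (hAU hm)
  · exact (hfreq.and_eventually hev).exists.elim fun j hj => hj.2 hj.1

end Network

lemma abs_sum_le_one_of_disjoint {ι : Type*} (s : Finset ι) {f : ι → ℝ} (hf : ∀ j, |f j| ≤ 1)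
    (hd : ∀ j k, j ≠ k → f j = 0 ∨ f k = 0) : |∑ j ∈ s, f j| ≤ 1 := by
  by_cases h : ∃ j ∈ s, f j ≠ 0
  · obtain ⟨j, hj, hfj⟩ := h
    rw [Finset.sum_eq_single_of_mem j hj fun k _ hkj => (hd k j hkj).resolve_right hfj]
    exact hf j
  · push Not at h
    simp [Finset.sum_eq_zero h]

lemma WeakBilin.tendsto_iff_forall_eval_tendsto' {𝕜 E F α : Type*} [CommSemiring 𝕜]
    [TopologicalSpace 𝕜] [AddCommMonoid E] [Module 𝕜 E] [AddCommMonoid F] [Module 𝕜 F]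
    (B : E →ₗ[𝕜] F →ₗ[𝕜] 𝕜) {l : Filter α} {f : α → WeakBilin B} {x : WeakBilin B} :
    Tendsto f l (𝓝 x) ↔ ∀ y, Tendsto (fun i => B (f i) y) l (𝓝 (B x y)) := by
  rw [nhds_induced, tendsto_comap_iff, tendsto_pi_nhds]
  rfl

section FunctionSpace

variable {X : Type*} [TopologicalSpace X]

lemma BoundedContinuousFunction.continuous_toContinuousMap {β : Type*} [PseudoMetricSpace β] :
    Continuous (toContinuousMap : (X →ᵇ β) → C(X, β)) :=
  continuous_iff_continuousAt.2 fun _ => ContinuousMap.tendsto_of_tendstoLocallyUniformly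
    (tendsto_iff_tendstoUniformly.1 tendsto_id).tendstoLocallyUniformly

lemma ContinuousLinearMap.exists_abs_le_of_abs_le_one (L : C(X, ℝ) →L[ℝ] ℝ) :
    ∃ C, ∀ h : C(X, ℝ), (∀ x, |h x| ≤ 1) → |L h| ≤ C := by
  let ι : (X →ᵇ ℝ) →L[ℝ] C(X, ℝ) :=
    ⟨toContinuousMapLinearMap X ℝ ℝ, continuous_toContinuousMap⟩
  refine ⟨‖L.comp ι‖, fun h hh => ?_⟩
  let hb := ofNormedAddCommGroup h h.continuous 1 hh
  calc |L h| = ‖(L.comp ι) hb‖ := rfl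
    _ ≤ ‖L.comp ι‖ * ‖hb‖ := (L.comp ι).le_opNorm hb
    _ ≤ ‖L.comp ι‖ := by
      simpa using mul_le_mul_of_nonneg_left (norm_ofNormedAddCommGroup_le _ zero_le_one hh)
        (norm_nonneg (L.comp ι))

lemma tendsto_toWeakSpace_zero_of_disjoint {a : ℕ → C(X, ℝ)} (hb : ∀ j x, |a j x| ≤ 1)
    (hd : ∀ j k x, j ≠ k → a j x = 0 ∨ a k x = 0) :
    Tendsto (fun j => toWeakSpace ℝ C(X, ℝ) (a j)) atTop (𝓝 0) := by
  refine (WeakBilin.tendsto_iff_forall_eval_tendsto' _).2 fun L => ?_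
  obtain ⟨C, hC⟩ := L.exists_abs_le_of_abs_le_one
  have hsum : Summable fun j => |L (a j)| := by
    refine summable_of_sum_le (c := C) (fun j => abs_nonneg _) fun s => ?_
    let σ : ℕ → ℝ := fun j => SignType.sign (L (a j))
    have : ∑ j ∈ s, |L (a j)| = L (∑ j ∈ s, σ j • a j) := by
      simp [σ, map_sum, sign_mul_self]
    rw [this]
    refine le_trans (le_abs_self _) (hC _ fun x => ?_)
    simp only [ContinuousMap.coe_sum, ContinuousMap.coe_smul, Finset.sum_apply, Pi.smul_apply,
      smul_eq_mul]
    refine abs_sum_le_one_of_disjoint s (fun j => ?_) fun j k hjk => ?_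
    · rw [abs_mul]
      refine mul_le_one₀ ?_ (abs_nonneg _) (hb j x)
      simp only [σ]
      cases SignType.sign (L (a j)) <;> norm_num
    · exact (hd j k x hjk).imp (fun h => by simp [h]) fun h => by simp [h]
  exact (map_zero L).symm ▸ hsum.of_abs.tendsto_atTop_zero

lemma WeakSpace.continuous_dual_apply {𝕜 E : Type*} [CommSemiring 𝕜] [TopologicalSpace 𝕜]
    [ContinuousAdd 𝕜] [ContinuousConstSMul 𝕜 𝕜] [AddCommMonoid E] [Module 𝕜 E]
    [TopologicalSpace E] (L : StrongDual 𝕜 E) :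
    Continuous fun h : WeakSpace 𝕜 E => L ((toWeakSpace 𝕜 E).symm h) :=
  WeakBilin.eval_continuous _ L

lemma exists_preperfect_of_not_isScattered {S : Set X} (hS : ¬ IsScattered S) :
    ∃ T ⊆ S, T.Nonempty ∧ Preperfect T := by
  simp only [IsScattered, not_forall, not_exists, not_and] at hS
  obtain ⟨T, hTS, hT, hiso⟩ := hS
  refine ⟨T, hTS, hT, fun x hx => accPt_iff_nhds.2 fun U hU => ?_⟩
  obtain ⟨V, hVU, hV, hxV⟩ := mem_nhds_iff.1 hU
  by_contra! h
  refine hiso x hx V hV (Subset.antisymm (fun y hy => ?_) (singleton_subset_iff.2 ⟨hxV, hx⟩))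
  exact h y ⟨hVU hy.1, hy.2⟩

lemma exists_bump [CompletelyRegularSpace X] {x : X} {W : Set X} (hW : IsOpen W) (hx : x ∈ W) :
    ∃ b : C(X, ℝ), (∀ y, |b y| ≤ 1) ∧ b x = 1 ∧ ∀ y ∉ W, b y = 0 := by
  obtain ⟨f, hf, hfx, hfW⟩ := CompletelyRegularSpace.completely_regular_isOpen x W hW hx
  refine ⟨⟨fun y => 1 - f y, by fun_prop⟩, fun y => ?_, by simp [hfx], fun y hy => by simp [hfW hy]⟩
  have := (f y).2
  simp only [ContinuousMap.coe_mk, abs_le, Set.mem_Icc] at this ⊢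
  constructor <;> linarith

structure Bump (T : Set X) where
  f : C(X, ℝ)
  center : X
  center_mem : center ∈ T
  f_center : f center = 1
  abs_f_le : ∀ x, |f x| ≤ 1

namespace Bump

variable {T : Set X}

def const {p : X} (hp : p ∈ T) : Bump T :=
  ⟨ContinuousMap.const X 1, p, hp, rfl, fun _ => by simp⟩

variable [T2Space X] [CompletelyRegularSpace X]

lemma exists_children (hT : Preperfect T) (d : Bump T) :
    ∃ c : Bool → Bump T, (∀ b x, d.f x ≤ 1 / 2 → (c b).f x = 0) ∧
      ∀ x, (c false).f x = 0 ∨ (c true).f x = 0 := by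
  set O := {x | 1 / 2 < d.f x}
  have hO : IsOpen O := isOpen_lt continuous_const d.f.continuous
  have hpO : d.center ∈ O := by show 1 / 2 < d.f d.center; rw [d.f_center]; norm_num
  obtain ⟨q, ⟨hqO, hqT⟩, hqp⟩ := accPt_iff_nhds.1 (hT _ d.center_mem) O (hO.mem_nhds hpO)
  obtain ⟨Wq, Wp, hWq, hWp, hqW, hpW, hdisj⟩ := t2_separation hqp
  obtain ⟨b₀, hb₀, hb₀p, hb₀W⟩ := exists_bump (hO.inter hWp) ⟨hpO, hpW⟩
  obtain ⟨b₁, hb₁, hb₁q, hb₁W⟩ := exists_bump (hO.inter hWq) ⟨hqO, hqW⟩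
  refine ⟨fun b => cond b ⟨b₁, q, hqT, hb₁q, hb₁⟩ ⟨b₀, d.center, d.center_mem, hb₀p, hb₀⟩,
    fun b x hx => ?_, fun x => ?_⟩
  · have hxO : x ∉ O := fun h => (not_lt.2 hx) h
    cases b
    · exact hb₀W x fun h => hxO h.1
    · exact hb₁W x fun h => hxO h.1
  · by_cases hx : x ∈ Wp
    · exact Or.inr (hb₁W x fun h => disjoint_left.1 hdisj h.2 hx)
    · exact Or.inl (hb₀W x fun h => hx h.2)

noncomputable def tree (hT : Preperfect T) (d : Bump T) : List Bool → Bump T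
  | [] => d
  | b :: w => (exists_children hT (tree hT d w)).choose b

variable {hT : Preperfect T} {d : Bump T}

lemma tree_cons_eq_zero {w : List Bool} {x : X} (hx : (tree hT d w).f x ≤ 1 / 2) (b : Bool) :
    (tree hT d (b :: w)).f x = 0 :=
  (exists_children hT (tree hT d w)).choose_spec.1 b x hx

lemma tree_cons_disjoint (b : Bool) (w : List Bool) (x : X) :
    (tree hT d (b :: w)).f x = 0 ∨ (tree hT d ((!b) :: w)).f x = 0 := by
  have := (exists_children hT (tree hT d w)).choose_spec.2 x
  cases b
  · exact this
  · exact this.symm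

lemma half_lt_of_tree_cons_ne_zero {b : Bool} {w : List Bool} {x : X}
    (h : (tree hT d (b :: w)).f x ≠ 0) : 1 / 2 < (tree hT d w).f x :=
  not_le.1 fun hle => h (tree_cons_eq_zero hle b)

lemma half_lt_of_tree_append_ne_zero {t s : List Bool} (ht : t ≠ []) {x : X}
    (h : (tree hT d (t ++ s)).f x ≠ 0) : 1 / 2 < (tree hT d s).f x := by
  induction t with
  | nil => exact absurd rfl ht
  | cons b t ih =>
    have hlt : 1 / 2 < (tree hT d (t ++ s)).f x := half_lt_of_tree_cons_ne_zero h
    rcases eq_or_ne t [] with rfl | ht'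
    · exact hlt
    · exact ih ht' (by linarith)

lemma tree_offBranch_eq_zero {u : ℕ → Bool} {j : ℕ} {x : X}
    (h : (tree hT d (branchPrefix u (j + 1))).f x ≠ 0) : (tree hT d (offBranch u j)).f x = 0 :=
  (tree_cons_disjoint (u j) _ x).resolve_left h

lemma tree_offBranch_disjoint (u : ℕ → Bool) {j k : ℕ} (x : X) (hjk : j ≠ k) :
    (tree hT d (offBranch u j)).f x = 0 ∨ (tree hT d (offBranch u k)).f x = 0 := by
  wlog hlt : j < k generalizing j k
  · exact (this hjk.symm (hjk.lt_or_gt.resolve_left hlt)).symm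
  refine or_iff_not_imp_right.2 fun hk => tree_offBranch_eq_zero ?_
  obtain ⟨t, ht⟩ := branchPrefix_suffix u (Nat.succ_le_of_lt hlt)
  have : offBranch u k = ((!u k) :: t) ++ branchPrefix u (j + 1) := by
    rw [offBranch, ← ht, List.cons_append]
  rw [this] at hk
  exact ((half_lt_of_tree_append_ne_zero (List.cons_ne_nil _ _) hk).trans' (by norm_num)).ne'

variable (hT d) in
lemma exists_forall_half_le_tree_branchPrefix {K : Set X} (hK : IsCompact K) (hTK : T ⊆ K)
    (u : ℕ → Bool) : ∃ x, ∀ m, 1 / 2 ≤ (tree hT d (branchPrefix u m)).f x := by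
  let C : ℕ → Set X := fun m => {x | 1 / 2 ≤ (tree hT d (branchPrefix u m)).f x} ∩ K
  have hC : ∀ m, IsClosed (C m) := fun m =>
    (isClosed_le continuous_const (ContinuousMap.continuous _)).inter hK.isClosed
  have hanti : ∀ m, C (m + 1) ⊆ C m := fun m y hy =>
    ⟨(half_lt_of_tree_cons_ne_zero (ne_of_gt (lt_of_lt_of_le (by norm_num) hy.1))).le, hy.2⟩
  have hne : ∀ m, (C m).Nonempty := fun m => by
    refine ⟨(tree hT d (branchPrefix u m)).center, ?_, hTK (Bump.center_mem _)⟩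
    show 1 / 2 ≤ (tree hT d (branchPrefix u m)).f (tree hT d (branchPrefix u m)).center
    rw [Bump.f_center]
    norm_num
  obtain ⟨x, hx⟩ := IsCompact.nonempty_iInter_of_sequence_nonempty_isCompact_isClosed C hanti hne
    (hK.of_isClosed_subset (hC 0) inter_subset_right) hC
  exact ⟨x, fun m => (mem_iInter.1 hx m).1⟩

end Bump

end FunctionSpace

/-- If a completely regular Hausdorff space `X` contains a non-scattered compact subset,
then `C_c(X)` with its weak topology is not an ℵ-space. -/
theorem cc_weak_not_aleph_of_nonscattered_compact
    (X : Type) [TopologicalSpace X] [T2Space X] [CompletelyRegularSpace X]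
    (K : Set X) (hK : IsCompact K) (hKs : ¬ IsScattered K) :
    ¬ IsAlephSpace (WeakSpace ℝ C(X, ℝ)) := by
  rintro ⟨-, -, hN⟩
  obtain ⟨T, hTK, ⟨p, hp⟩, hT⟩ := exists_preperfect_of_not_isScattered hKs
  let tree := Bump.tree hT (Bump.const hp)
  refine not_exists_sigmaLocallyFinite_kNetwork_of_tree
    (fun w => toWeakSpace ℝ C(X, ℝ) (tree w).f) 0 (fun u => ?_) (fun u => ?_) hN
  · exact tendsto_toWeakSpace_zero_of_disjoint (fun j => (tree _).abs_f_le)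
      fun j k x hjk => Bump.tree_offBranch_disjoint u x hjk
  · obtain ⟨x, hx⟩ := Bump.exists_forall_half_le_tree_branchPrefix hT (Bump.const hp) hK hTK u
    refine ⟨{h | |(toWeakSpace ℝ C(X, ℝ)).symm h x| < 1 / 2},
      isOpen_lt (WeakSpace.continuous_dual_apply (ContinuousMap.evalCLM ℝ x)).abs continuous_const,
      by simp, fun j => ?_, fun m hm => ?_⟩
    · simp [tree, Bump.tree_offBranch_eq_zero (ne_of_gt ((hx (j + 1)).trans_lt' (by norm_num)))]
    · simp only [mem_ofPred_eq, LinearEquiv.symm_apply_apply] at hm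
      linarith [(abs_lt.1 hm).2, hx m]
end

section
/- Let X be a Tychonoff (completely regular Hausdorff) space such that every compact subset of X is countable. If C_c(X) endowed with its weak topology σ(E,E′) is a σ-space (in particular, if it is an ℵ-space), then X is separable. -/
open TopologicalSpace Filter Set

/-!
A continuous functional on `C_c(X)` only sees the values on a compact, hence countable, set, so
every weak neighbourhood of `0` contains all functions vanishing on some countable set. Local
finiteness at `0` gives neighbourhoods `Vₙ` such that only countably many members `A` of the
network meet `⋂ Vₙ`. Let `D` be a countable set containing such a set for every `Vₙ` and a point of
each nonempty `{y | h y ≠ 0 for all h ∈ A}`. If `g` vanishes on `D` but `g x ≠ 0`, then `g ∈ ⋂ Vₙ`,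
and a member `A` with `g ∈ A ⊆ {h | h x ≠ 0}` is one of the countably many, so `g` cannot vanish at
the point chosen for `A`. By complete regularity, `D` is dense.
-/

open Topology

section

variable {X : Type*} [TopologicalSpace X]

theorem ContinuousMap.exists_isCompact_map_eq_zero_of_eqOn_zero {𝕜 : Type*} [NormedField 𝕜]
    (φ : C(X, 𝕜) →L[𝕜] 𝕜) :
    ∃ K : Set X, IsCompact K ∧ ∀ f : C(X, 𝕜), EqOn f 0 K → φ f = 0 := by
  have hφ : φ ⁻¹' Metric.ball 0 1 ∈ 𝓝 (0 : C(X, 𝕜)) :=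
    φ.continuous.continuousAt.preimage_mem_nhds (by simpa using Metric.ball_mem_nhds 0 one_pos)
  obtain ⟨⟨K, ε⟩, ⟨hK, hε⟩, hKε⟩ :=
    (nhds_basis_uniformity' Metric.uniformity_basis_dist.compactConvergenceUniformity).mem_iff.mp hφ
  refine ⟨K, hK, fun f hf => by_contra fun hne => ?_⟩
  have hsmul : (φ f)⁻¹ • f ∈ φ ⁻¹' Metric.ball 0 1 := hKε fun x hx => by simpa [hf hx] using hε
  simp [inv_mul_cancel₀ hne] at hsmul

theorem WeakBilin.exists_finite_forall_eq_zero_mem_of_mem_nhds_zero {𝕜 E F : Type*}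
    [CommRing 𝕜] [TopologicalSpace 𝕜] [AddCommGroup E] [Module 𝕜 E] [AddCommGroup F] [Module 𝕜 F]
    {B : E →ₗ[𝕜] F →ₗ[𝕜] 𝕜} {V : Set (WeakBilin B)} (hV : V ∈ 𝓝 0) :
    ∃ s : Set F, s.Finite ∧ ∀ x : WeakBilin B, (∀ y ∈ s, B x y = 0) → x ∈ V := by
  rw [nhds_induced, mem_comap, nhds_pi] at hV
  obtain ⟨W, hW, hWV⟩ := hV
  obtain ⟨s, hs, t, ht, hst⟩ := mem_pi.mp hW
  refine ⟨s, hs, fun x hx => hWV (hst fun y hy => show B x y ∈ t y from ?_)⟩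
  rw [hx y hy, ← LinearMap.map_zero₂ B y]
  exact mem_of_mem_nhds (ht y)

theorem exists_countable_forall_eqOn_zero_mem_iInter_of_mem_nhds_zero
    (hc : ∀ K : Set X, IsCompact K → K.Countable) {V : ℕ → Set (WeakSpace ℝ C(X, ℝ))}
    (hV : ∀ n, V n ∈ 𝓝 0) :
    ∃ C : Set X, C.Countable ∧
      ∀ g : C(X, ℝ), EqOn g 0 C → toWeakSpace ℝ C(X, ℝ) g ∈ ⋂ n, V n := by
  choose s hs hsV using fun n => WeakBilin.exists_finite_forall_eq_zero_mem_of_mem_nhds_zero (hV n)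
  choose K hK hKφ using fun φ : C(X, ℝ) →L[ℝ] ℝ =>
    ContinuousMap.exists_isCompact_map_eq_zero_of_eqOn_zero φ
  refine ⟨⋃ n, ⋃ φ ∈ s n, K φ,
    countable_iUnion fun n => (hs n).countable.biUnion fun φ _ => hc _ (hK φ), fun g hg => ?_⟩
  exact mem_iInter.mpr fun n => hsV n g fun φ hφ =>
    hKφ φ g (hg.mono (subset_iUnion_of_subset n (subset_biUnion_of_mem (u := K) hφ)))

theorem IsSigmaLocallyFinite.exists_nhds_countable_inter_iInter_nonempty {Y : Type*}
    [TopologicalSpace Y] {N : Set (Set Y)} (hN : IsSigmaLocallyFinite N) (p : Y) :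
    ∃ V : ℕ → Set Y, (∀ n, V n ∈ 𝓝 p) ∧ {A ∈ N | (A ∩ ⋂ n, V n).Nonempty}.Countable := by
  obtain ⟨f, hf, rfl⟩ := hN
  choose V hV hfin using fun n => hf n p
  refine ⟨V, hV, (countable_iUnion fun n => (hfin n).countable).mono ?_⟩
  rintro A ⟨hA, y, hyA, hyV⟩
  obtain ⟨n, hn⟩ := mem_iUnion.mp hA
  exact mem_iUnion.mpr ⟨n, hn, y, hyA, mem_iInter.mp hyV n⟩

theorem exists_countable_forall_inter_nonempty {α ι : Type*} [Countable ι] (S : ι → Set α) :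
    ∃ D : Set α, D.Countable ∧ ∀ i, (S i).Nonempty → (S i ∩ D).Nonempty :=
  ⟨range fun i : {i // (S i).Nonempty} => i.2.some, countable_range _,
    fun i hi => ⟨hi.some, hi.some_mem, ⟨i, hi⟩, rfl⟩⟩

theorem dense_of_forall_eqOn_zero [CompletelyRegularSpace X] {D : Set X}
    (hD : ∀ g : C(X, ℝ), EqOn g 0 D → g = 0) : Dense D := by
  refine dense_iff_closure_eq.mpr (eq_univ_of_forall fun x => by_contra fun hx => ?_)
  obtain ⟨f, hf, hfx, hf1⟩ :=
    CompletelyRegularSpace.completely_regular x (closure D) isClosed_closure hx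
  let g : C(X, ℝ) := 1 - ⟨fun y => f y, continuous_subtype_val.comp hf⟩
  have hg : g = 0 := hD g fun y hy => by simp [g, hf1 (subset_closure hy)]
  simpa [g, hfx] using DFunLike.congr_fun hg x

end

theorem separable_of_cc_weak_sigmaSpace_general
    (X : Type) [TopologicalSpace X] [CompletelyRegularSpace X]
    (hc : ∀ K : Set X, IsCompact K → K.Countable)
    (hσ : ∃ N : Set (Set (WeakSpace ℝ C(X, ℝ))), IsSigmaLocallyFinite N ∧ IsNetwork N) :
    TopologicalSpace.SeparableSpace X := by
  obtain ⟨N, hN, hnet⟩ := hσ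
  obtain ⟨V, hV, h𝒜⟩ := hN.exists_nhds_countable_inter_iInter_nonempty 0
  obtain ⟨C, hC, hCV⟩ := exists_countable_forall_eqOn_zero_mem_iInter_of_mem_nhds_zero hc hV
  have := h𝒜.to_subtype
  obtain ⟨P, hP, hPS⟩ := exists_countable_forall_inter_nonempty
    fun A : {A ∈ N | (A ∩ ⋂ n, V n).Nonempty} =>
      {y : X | ∀ h ∈ A.1, (toWeakSpace ℝ C(X, ℝ)).symm h y ≠ 0}
  refine ⟨C ∪ P, hC.union hP, dense_of_forall_eqOn_zero fun g hg => ?_⟩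
  ext x
  by_contra hgx
  have hU : IsOpen {h : WeakSpace ℝ C(X, ℝ) | (toWeakSpace ℝ C(X, ℝ)).symm h x ≠ 0} :=
    isOpen_ne_fun (WeakBilin.eval_continuous _ (ContinuousMap.evalCLM ℝ x)) continuous_const
  obtain ⟨A, hAN, hgA, hAU⟩ := hnet _ _ hU hgx
  obtain ⟨y, hyA, hyP⟩ := hPS ⟨A, hAN, _, hgA, hCV g (hg.mono subset_union_left)⟩ ⟨x, hAU⟩
  exact hyA _ hgA (hg (subset_union_right hyP))

/-- If every compact subset of a Tychonoff space `X` is countable and `C_c(X)` with its weak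
topology is a σ-space (has a σ-locally finite network), then `X` is separable. -/
theorem separable_of_cc_weak_sigmaSpace
    (X : Type) [TopologicalSpace X] [T2Space X] [CompletelyRegularSpace X]
    (hc : ∀ K : Set X, IsCompact K → K.Countable)
    (hσ : ∃ N : Set (Set (WeakSpace ℝ C(X, ℝ))), IsSigmaLocallyFinite N ∧ IsNetwork N) :
    TopologicalSpace.SeparableSpace X :=
  separable_of_cc_weak_sigmaSpace_general X hc hσ
end
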